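/- arXiv:1605.03296 — 7 statements merged into one kernel-verified Lean document; each statement's English description precedes it below -/
import Mathlib

section
/- Let E be a nonempty finite-dimensional smooth manifold (Hausdorff, second countable, without boundary) and let h be a homogeneity structure on E such that h(0, v) = e₀ for all v ∈ E, for some fixed point e₀ ∈ E. Assume h is regular, i.e. for every v ∈ E the derivative at t = 0 of the smooth curve t ↦ h(t, v) (a vector in the tangent space to E at e₀) vanishes if and only if v = e₀. Then there exist n ∈ ℕ and a diffeomorphism Φ : E → ℝⁿ such that Φ(h(t, v)) = t • Φ(v) for all t ∈ ℝ and v ∈ E; in other words, h comes from a real vector space structure on E. -/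
/-!
The velocity map `Φ v = d/dt|_{t=0} h (t, v) ∈ T_{e₀}E` is smooth and satisfies
`Φ (h (t, v)) = t • Φ v`. Differentiating this at `t = 0` shows that `A = dΦ(e₀)` fixes every
value of `Φ`, so `A ∘ A = A`. Let `p` be `Φ` read in a chart, with `a` the coordinate of `e₀`.
If `A w = 0`, the inverse function theorem for `p + (1 - A)(· - a)` hits small multiples
`t • w`; applying `A` shows that `Φ` vanishes at such a preimage, which regularity forces to be
`e₀`, so `w = 0`. Hence `A = 1` and `Φ` is a local diffeomorphism at `e₀`. Since `h (t, v) → e₀`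
as `t → 0`, rescaling by `h (t, ·)` and `t⁻¹ •` spreads this to all of `E`, and the range of `Φ`,
a neighbourhood of `0` closed under scaling, is the whole model space.
-/

open Manifold Set Function Filter Topology
open scoped ContDiff

section IdempotentDerivative

variable {𝕜 : Type*} [NontriviallyNormedField 𝕜] {F : Type*} [NormedAddCommGroup F]
  [NormedSpace 𝕜 F] {p : F → F} {A : F →L[𝕜] F} {a : F}

theorem HasFDerivAt.comp_self_eq_of_eventually_apply_eq_self (hp : HasFDerivAt p A a)
    (hfix : ∀ᶠ y in 𝓝 a, A (p y) = p y) : A ∘L A = A :=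
  ((A.hasFDerivAt.comp a hp).congr_of_eventuallyEq (hfix.mono fun _ hy => hy.symm)).unique hp

theorem HasStrictFDerivAt.eq_id_of_eventually_apply_eq_self [CompleteSpace F]
    (hp : HasStrictFDerivAt p A a) (hfix : ∀ᶠ y in 𝓝 a, A (p y) = p y)
    (hfiber : ∀ᶠ y in 𝓝 a, p y = p a → y = a) : A = ContinuousLinearMap.id 𝕜 F := by
  have hAA (x : F) : A (A x) = A x :=
    congrArg (fun L : F →L[𝕜] F => L x)
      (hp.hasFDerivAt.comp_self_eq_of_eventually_apply_eq_self hfix)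
  -- After applying `A`, `G` is indistinguishable from `p`, but its derivative at `a` is `1`.
  set G : F → F := fun y => p y + (ContinuousLinearMap.id 𝕜 F - A) (y - a)
  have hG : HasStrictFDerivAt G ((ContinuousLinearEquiv.refl 𝕜 F : F ≃L[𝕜] F) : F →L[𝕜] F) a := by
    convert hp.add ((ContinuousLinearMap.id 𝕜 F - A).hasStrictFDerivAt.comp a
      ((hasStrictFDerivAt_id a).sub_const a)) using 1
    · rfl
    · ext x; simp
  have hAG (y : F) : A (G y) = A (p y) := by simp [G, hAA]
  have hGa : G a = p a := by simp [G]
  have hker (w : F) (hw : A w = 0) : w = 0 := by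
    have himage : G '' {y | A (p y) = p y ∧ (p y = p a → y = a)} ∈ 𝓝 (p a) := by
      have := image_mem_map (m := G) (hfix.and hfiber)
      rwa [hG.map_nhds_eq_of_equiv, hGa] at this
    have hline : Tendsto (fun t : 𝕜 => p a + t • w) (𝓝[≠] 0) (𝓝 (p a)) := by
      have : Continuous (fun t : 𝕜 => p a + t • w) := by fun_prop
      simpa using (this.tendsto 0).mono_left nhdsWithin_le_nhds
    obtain ⟨t, ⟨y, ⟨hyfix, hyfiber⟩, hy⟩, ht⟩ :=
      ((hline.eventually himage).and self_mem_nhdsWithin).exists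
    have hpy : p y = p a := by
      rw [← hyfix, ← hAG, hy, map_add, map_smul, hw, smul_zero, add_zero, hfix.self_of_nhds]
    rw [hyfiber hpy, hGa, left_eq_add, smul_eq_zero] at hy
    exact hy.resolve_left ht
  ext x
  have := hker (x - A x) (by rw [map_sub, hAA, sub_self])
  simpa using (sub_eq_zero.mp this).symm

end IdempotentDerivative

section InverseFunctionTheorem

variable {𝕜 : Type*} [RCLike 𝕜] {F F' : Type*} [NormedAddCommGroup F] [NormedSpace 𝕜 F]
  [NormedAddCommGroup F'] [NormedSpace 𝕜 F'] {n : WithTop ℕ∞}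
  {M : Type*} [TopologicalSpace M] [ChartedSpace F M]

theorem HasMFDerivAt.hasFDerivAt_comp_chartAt_symm {f : M → F'} {x : M} {f' : F →L[𝕜] F'}
    (hf : HasMFDerivAt 𝓘(𝕜, F) 𝓘(𝕜, F') f x f') :
    HasFDerivAt (f ∘ (chartAt F x).symm) f' (chartAt F x x) := by
  have := hf.2
  simp only [writtenInExtChartAt, chartAt_self_eq, mfld_simps] at this
  exact this.hasFDerivAt univ_mem

theorem ContDiffOn.isLocalDiffeomorphAt [CompleteSpace F] {p : F → F'} {U : Set F}
    (hp : ContDiffOn 𝕜 n p U) (hU : IsOpen U) (hn : 1 ≤ n) {a : F} (ha : a ∈ U)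
    {A : F ≃L[𝕜] F'} (hA : HasFDerivAt p (A : F →L[𝕜] F') a) :
    IsLocalDiffeomorphAt 𝓘(𝕜, F) 𝓘(𝕜, F') n p a := by
  have hn0 : n ≠ 0 := (zero_lt_one.trans_le hn).ne'
  -- The inverse is smooth wherever the derivative of `p` is invertible, an open condition.
  set W := U ∩ fderiv 𝕜 p ⁻¹' range ((↑) : (F ≃L[𝕜] F') → F →L[𝕜] F')
  have hW : IsOpen W :=
    (hp.continuousOn_fderiv_of_isOpen hU hn).isOpen_inter_preimage hU ContinuousLinearEquiv.isOpen
  have haW : a ∈ W := ⟨ha, A, hA.fderiv.symm⟩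
  set P := ((hp.contDiffAt (hU.mem_nhds ha)).toOpenPartialHomeomorph p hA hn0).restrOpen W hW
  have hPW : P.source ⊆ W := inter_subset_right
  refine ⟨{ P.toPartialEquiv with
      open_source := P.open_source
      open_target := P.open_target
      contMDiffOn_toFun := (hp.mono (hPW.trans inter_subset_left)).contMDiffOn
      contMDiffOn_invFun := fun z hz => ?_ }, ⟨?_, haW⟩, fun _ _ => rfl⟩
  · obtain ⟨hzU, B, hB⟩ := hPW (P.map_target hz)
    have hpz : ContDiffAt 𝕜 n p (P.symm z) := hp.contDiffAt (hU.mem_nhds hzU)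
    exact (P.contDiffAt_symm hz (hB ▸ (hpz.differentiableAt hn0).hasFDerivAt) hpz).contMDiffAt
      |>.contMDiffWithinAt
  · exact (hp.contDiffAt (hU.mem_nhds ha)).mem_toOpenPartialHomeomorph_source hA hn0

variable (n) in
def chartPartialDiffeomorph [IsManifold 𝓘(𝕜, F) n M] (x : M) :
    PartialDiffeomorph 𝓘(𝕜, F) 𝓘(𝕜, F) M F n where
  toPartialEquiv := (chartAt F x).toPartialEquiv
  open_source := (chartAt F x).open_source
  open_target := (chartAt F x).open_target
  contMDiffOn_toFun := contMDiffOn_chart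
  contMDiffOn_invFun := contMDiffOn_chart_symm

theorem ContMDiff.isLocalDiffeomorphAt_of_hasMFDerivAt [CompleteSpace F]
    [IsManifold 𝓘(𝕜, F) n M] {f : M → F'} (hf : ContMDiff 𝓘(𝕜, F) 𝓘(𝕜, F') n f) (hn : 1 ≤ n)
    {x : M} {A : F ≃L[𝕜] F'} (hA : HasMFDerivAt 𝓘(𝕜, F) 𝓘(𝕜, F') f x (A : F →L[𝕜] F')) :
    IsLocalDiffeomorphAt 𝓘(𝕜, F) 𝓘(𝕜, F') n f x := by
  have hp : ContDiffOn 𝕜 n (f ∘ (chartAt F x).symm) (chartAt F x).target :=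
    contMDiffOn_iff_contDiffOn.mp (hf.comp_contMDiffOn contMDiffOn_chart_symm)
  obtain ⟨Ψ, hxΨ, hΨ⟩ := hp.isLocalDiffeomorphAt (chartAt F x).open_target hn
    (mem_chart_target F x) hA.hasFDerivAt_comp_chartAt_symm
  refine ⟨(chartPartialDiffeomorph n x).trans Ψ, ⟨mem_chart_source F x, hxΨ⟩, fun z hz => ?_⟩
  have hz' : chartAt F x z ∈ Ψ.source := hz.2
  change f z = Ψ (chartAt F x z)
  rw [← hΨ hz', comp_apply, (chartAt F x).left_inv hz.1]

end InverseFunctionTheorem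

section EquivariantMaps

variable {X V : Type*} [AddCommGroup V] [Module ℝ V] {h : ℝ × X → X} {Φ : X → V}

theorem injective_of_injOn_of_mem_nhds [TopologicalSpace X] (hone : ∀ x : X, h (1, x) = x)
    (hmul : ∀ (t s : ℝ) (x : X), h (t, h (s, x)) = h (t * s, x))
    (hΦ : ∀ (t : ℝ) (x : X), Φ (h (t, x)) = t • Φ x) {x₀ : X}
    (hcont : ∀ x : X, Tendsto (fun t : ℝ => h (t, x)) (𝓝 0) (𝓝 x₀))
    {U : Set X} (hU : U ∈ 𝓝 x₀) (hinj : InjOn Φ U) : Injective Φ := by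
  intro x y hxy
  obtain ⟨t, ⟨hx, hy⟩, ht⟩ := ((((hcont x).eventually hU).and ((hcont y).eventually hU)).filter_mono
    nhdsWithin_le_nhds |>.and (self_mem_nhdsWithin (s := {0}ᶜ))).exists
  have htxy : h (t, x) = h (t, y) := hinj hx hy (by rw [hΦ, hΦ, hxy])
  calc x = h (t⁻¹, h (t, x)) := by rw [hmul, inv_mul_cancel₀ ht, hone]
    _ = y := by rw [htxy, hmul, inv_mul_cancel₀ ht, hone]

theorem surjective_of_range_mem_nhds_zero [TopologicalSpace V] [ContinuousSMul ℝ V]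
    (hΦ : ∀ (t : ℝ) (x : X), Φ (h (t, x)) = t • Φ x) (hrange : range Φ ∈ 𝓝 0) :
    Surjective Φ := by
  intro y
  have hline : Tendsto (fun t : ℝ => t • y) (𝓝[≠] 0) (𝓝 0) := by
    have : Continuous fun t : ℝ => t • y := by fun_prop
    simpa using (this.tendsto 0).mono_left nhdsWithin_le_nhds
  obtain ⟨t, ⟨x, hx⟩, ht⟩ := ((hline.eventually hrange).and self_mem_nhdsWithin).exists
  exact ⟨h (t⁻¹, x), by rw [hΦ, hx, smul_smul, inv_mul_cancel₀ ht, one_smul]⟩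

end EquivariantMaps

section HomogeneityStructure

variable {F : Type*} [NormedAddCommGroup F] [NormedSpace ℝ F] {E : Type*} [TopologicalSpace E]
  [ChartedSpace F E] {h : ℝ × E → E}

variable (F h) in
noncomputable def velocityAtZero (v : E) : F :=
  mfderiv 𝓘(ℝ, ℝ) 𝓘(ℝ, F) (fun t : ℝ => h (t, v)) 0 1

theorem velocityAtZero_act_eq_smul {v : E}
    (hv : MDifferentiableAt 𝓘(ℝ, ℝ) 𝓘(ℝ, F) (fun t : ℝ => h (t, v)) 0)
    (hmul : ∀ (t s : ℝ) (v : E), h (t, h (s, v)) = h (t * s, v)) (s : ℝ) :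
    velocityAtZero F h (h (s, v)) = s • velocityAtZero F h v := by
  have hscale : mfderiv 𝓘(ℝ, ℝ) 𝓘(ℝ, ℝ) (fun t : ℝ => t * s) 0 1 = s • (1 : ℝ) := by
    rw [mfderiv_eq_fderiv]
    change fderiv ℝ (fun t : ℝ => t * s) 0 1 = s • (1 : ℝ)
    rw [fderiv_apply_one_eq_deriv, deriv_mul_const_field', deriv_id'']; simp
  have hcomp : (fun t : ℝ => h (t, h (s, v))) = (fun t : ℝ => h (t, v)) ∘ (fun t : ℝ => t * s) :=
    funext fun t => hmul t s v
  have hd : MDifferentiableAt 𝓘(ℝ, ℝ) 𝓘(ℝ, ℝ) (fun t : ℝ => t * s) 0 :=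
    (differentiableAt_id.mul_const s).mdifferentiableAt
  rw [velocityAtZero, hcomp, mfderiv_comp (I' := 𝓘(ℝ, ℝ)) 0 (by simpa using hv) hd, zero_mul]
  change mfderiv 𝓘(ℝ, ℝ) 𝓘(ℝ, F) (fun t : ℝ => h (t, v)) 0
    (mfderiv 𝓘(ℝ, ℝ) 𝓘(ℝ, ℝ) (fun t : ℝ => t * s) 0 1) = _
  rw [hscale]
  exact map_smul _ s (1 : ℝ)

theorem contMDiff_velocityAtZero [IsManifold 𝓘(ℝ, F) ∞ E]
    (hsmooth : ContMDiff (𝓘(ℝ, ℝ).prod 𝓘(ℝ, F)) 𝓘(ℝ, F) ∞ h)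
    {e₀ : E} (hzero : ∀ v : E, h (0, v) = e₀) :
    ContMDiff 𝓘(ℝ, F) 𝓘(ℝ, F) ∞ (velocityAtZero F h) := by
  intro v₀
  have hderiv := ContMDiffAt.mfderiv (x₀ := v₀) (fun (v : E) (t : ℝ) => h (t, v))
    (fun _ : E => (0 : ℝ)) (hsmooth.comp (contMDiff_snd.prodMk contMDiff_fst)).contMDiffAt
    (contMDiffAt_const (n := ∞)) (by simp)
  -- All the curves start at `e₀`, so the change of tangent coordinates is trivial.
  have hcoord (v : E) : inTangentCoordinates 𝓘(ℝ, ℝ) 𝓘(ℝ, F) (fun _ : E => (0 : ℝ))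
      (fun v : E => h (0, v)) (fun v : E => mfderiv 𝓘(ℝ, ℝ) 𝓘(ℝ, F) (fun t : ℝ => h (t, v)) 0)
      v₀ v 1 = velocityAtZero F h v := by
    erw [inTangentCoordinates_eq]
    · simp only [ContinuousLinearMap.comp_apply, hzero]
      have hR : (tangentBundleCore 𝓘(ℝ, ℝ) ℝ).coordChange (achart ℝ (0 : ℝ))
          (achart ℝ (0 : ℝ)) (0 : ℝ) (1 : ℝ) = (1 : ℝ) :=
        (tangentBundleCore 𝓘(ℝ, ℝ) ℝ).coordChange_self (achart ℝ (0 : ℝ)) (0 : ℝ)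
          (mem_achart_source ℝ (0 : ℝ)) (1 : ℝ)
      exact ((tangentBundleCore 𝓘(ℝ, F) E).coordChange_self (achart _ e₀) e₀
        (mem_achart_source _ e₀) _).trans
        (congrArg (mfderiv 𝓘(ℝ, ℝ) 𝓘(ℝ, F) (fun t : ℝ => h (t, v)) 0) hR)
    · exact mem_chart_source ℝ _
    · rw [hzero, hzero]; exact mem_chart_source _ _
  exact ((ContinuousLinearMap.apply ℝ F (1 : ℝ)).contDiff.contMDiff.contMDiffAt.comp v₀
    hderiv).congr_of_eventuallyEq (Eventually.of_forall fun v => (hcoord v).symm)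

theorem mfderiv_velocityAtZero_apply_velocityAtZero [IsManifold 𝓘(ℝ, F) ∞ E]
    (hsmooth : ContMDiff (𝓘(ℝ, ℝ).prod 𝓘(ℝ, F)) 𝓘(ℝ, F) ∞ h)
    (hmul : ∀ (t s : ℝ) (v : E), h (t, h (s, v)) = h (t * s, v))
    {e₀ : E} (hzero : ∀ v : E, h (0, v) = e₀) (v : E) :
    mfderiv 𝓘(ℝ, F) 𝓘(ℝ, F) (velocityAtZero F h) e₀ (velocityAtZero F h v) =
      velocityAtZero F h v := by
  have hcurve : ContMDiff 𝓘(ℝ, ℝ) 𝓘(ℝ, F) ∞ (fun t : ℝ => h (t, v)) :=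
    hsmooth.comp (contMDiff_id.prodMk contMDiff_const)
  have hline : (velocityAtZero F h ∘ fun t : ℝ => h (t, v)) =
      fun t : ℝ => t • velocityAtZero F h v :=
    funext fun t => velocityAtZero_act_eq_smul (hcurve.mdifferentiableAt (by simp)) hmul t
  have hchain := mfderiv_comp (I' := 𝓘(ℝ, F)) 0
    ((contMDiff_velocityAtZero hsmooth hzero).mdifferentiableAt (by simp) (x := h (0, v)))
    (hcurve.mdifferentiableAt (by simp))
  rw [hline, hzero] at hchain
  have hline' : mfderiv 𝓘(ℝ, ℝ) 𝓘(ℝ, F) (fun t : ℝ => t • velocityAtZero F h v) 0 1 =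
      velocityAtZero F h v := by
    rw [mfderiv_eq_fderiv]
    change fderiv ℝ (fun t : ℝ => t • velocityAtZero F h v) 0 1 = _
    rw [fderiv_apply_one_eq_deriv, deriv_smul_const differentiableAt_id, deriv_id'', one_smul]
  calc _ = (mfderiv 𝓘(ℝ, F) 𝓘(ℝ, F) (velocityAtZero F h) e₀).comp
        (mfderiv 𝓘(ℝ, ℝ) 𝓘(ℝ, F) (fun t : ℝ => h (t, v)) 0) 1 := rfl
    _ = _ := by rw [← hchain]; exact hline'

theorem isLocalDiffeomorphAt_velocityAtZero [CompleteSpace F] [IsManifold 𝓘(ℝ, F) ∞ E]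
    (hsmooth : ContMDiff (𝓘(ℝ, ℝ).prod 𝓘(ℝ, F)) 𝓘(ℝ, F) ∞ h)
    (hmul : ∀ (t s : ℝ) (v : E), h (t, h (s, v)) = h (t * s, v))
    {e₀ : E} (hzero : ∀ v : E, h (0, v) = e₀)
    (hreg : ∀ v : E, velocityAtZero F h v = 0 ↔ v = e₀) :
    IsLocalDiffeomorphAt 𝓘(ℝ, F) 𝓘(ℝ, F) ∞ (velocityAtZero F h) e₀ := by
  set Φ := velocityAtZero F h
  have hΦ : ContMDiff 𝓘(ℝ, F) 𝓘(ℝ, F) ∞ Φ := contMDiff_velocityAtZero hsmooth hzero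
  set A : F →L[ℝ] F := mfderiv 𝓘(ℝ, F) 𝓘(ℝ, F) Φ e₀
  have hA : HasMFDerivAt 𝓘(ℝ, F) 𝓘(ℝ, F) Φ e₀ A := (hΦ.mdifferentiableAt (by simp)).hasMFDerivAt
  set c := chartAt F e₀
  have hp : ContDiffAt ℝ ∞ (Φ ∘ c.symm) (c e₀) :=
    (contMDiffOn_iff_contDiffOn.mp (hΦ.comp_contMDiffOn contMDiffOn_chart_symm)).contDiffAt
      (c.open_target.mem_nhds (mem_chart_target F e₀))
  have hfiber : ∀ᶠ y in 𝓝 (c e₀), Φ (c.symm y) = Φ (c.symm (c e₀)) → y = c e₀ := by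
    filter_upwards [c.open_target.mem_nhds (mem_chart_target F e₀)] with y hy hΦy
    rw [c.left_inv (mem_chart_source F e₀), (hreg e₀).2 rfl, hreg] at hΦy
    rw [← c.right_inv hy, hΦy]
  have hpA : HasStrictFDerivAt (Φ ∘ c.symm) A (c e₀) :=
    hp.hasStrictFDerivAt' hA.hasFDerivAt_comp_chartAt_symm (by simp)
  have hAid : A = ContinuousLinearMap.id ℝ F := hpA.eq_id_of_eventually_apply_eq_self
    (.of_forall fun _ => mfderiv_velocityAtZero_apply_velocityAtZero hsmooth hmul hzero _) hfiber
  exact hΦ.isLocalDiffeomorphAt_of_hasMFDerivAt (by simp) (A := ContinuousLinearEquiv.refl ℝ F)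
    (by rw [ContinuousLinearEquiv.coe_refl, ← hAid]; exact hA)

noncomputable def homogeneityDiffeomorph (hsmooth : ContMDiff (𝓘(ℝ, ℝ).prod 𝓘(ℝ, F)) 𝓘(ℝ, F) ∞ h)
    (hone : ∀ v : E, h (1, v) = v) (hmul : ∀ (t s : ℝ) (v : E), h (t, h (s, v)) = h (t * s, v))
    {t : ℝ} (ht : t ≠ 0) : Diffeomorph 𝓘(ℝ, F) 𝓘(ℝ, F) E E ∞ where
  toFun v := h (t, v)
  invFun v := h (t⁻¹, v)
  left_inv v := by simp only [hmul, inv_mul_cancel₀ ht, hone]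
  right_inv v := by simp only [hmul, mul_inv_cancel₀ ht, hone]
  contMDiff_toFun := hsmooth.comp (contMDiff_const.prodMk contMDiff_id)
  contMDiff_invFun := hsmooth.comp (contMDiff_const.prodMk contMDiff_id)

theorem isLocalDiffeomorph_of_isLocalDiffeomorphAt {Φ : E → F}
    (hsmooth : ContMDiff (𝓘(ℝ, ℝ).prod 𝓘(ℝ, F)) 𝓘(ℝ, F) ∞ h)
    (hone : ∀ v : E, h (1, v) = v) (hmul : ∀ (t s : ℝ) (v : E), h (t, h (s, v)) = h (t * s, v))
    (hΦ : ∀ (t : ℝ) (v : E), Φ (h (t, v)) = t • Φ v) {e₀ : E}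
    (hcont : ∀ v : E, Tendsto (fun t : ℝ => h (t, v)) (𝓝 0) (𝓝 e₀))
    (he₀ : IsLocalDiffeomorphAt 𝓘(ℝ, F) 𝓘(ℝ, F) ∞ Φ e₀) :
    IsLocalDiffeomorph 𝓘(ℝ, F) 𝓘(ℝ, F) ∞ Φ := by
  intro v
  obtain ⟨Ψ, he₀Ψ, hΦΨ⟩ := he₀
  obtain ⟨t, htv, ht⟩ := (((hcont v).eventually (Ψ.open_source.mem_nhds he₀Ψ)).filter_mono
    nhdsWithin_le_nhds |>.and (self_mem_nhdsWithin (s := {0}ᶜ))).exists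
  have hΦt : IsLocalDiffeomorphAt 𝓘(ℝ, F) 𝓘(ℝ, F) ∞ Φ (h (t, v)) := ⟨Ψ, htv, hΦΨ⟩
  have hrescale : Φ = (t⁻¹ • ·) ∘ Φ ∘ fun w => h (t, w) :=
    funext fun w => by simp only [comp_apply, hΦ, smul_smul, inv_mul_cancel₀ ht, one_smul]
  have hscale : IsLocalDiffeomorphAt 𝓘(ℝ, F) 𝓘(ℝ, F) ∞ (t⁻¹ • · : F → F) (Φ (h (t, v))) :=
    (ContinuousLinearEquiv.smulLeft (R₁ := ℝ) (Units.mk0 t⁻¹ (inv_ne_zero ht))).toDiffeomorph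
      |>.isLocalDiffeomorph _
  rw [hrescale]
  exact (((homogeneityDiffeomorph hsmooth hone hmul ht).isLocalDiffeomorph v).comp 𝓘(ℝ, F) F
    hΦt).comp 𝓘(ℝ, F) F hscale

end HomogeneityStructure

theorem regular_homogeneity_structure_is_vector_space_general
    {d : ℕ} {E : Type*} [TopologicalSpace E]
    [ChartedSpace (EuclideanSpace ℝ (Fin d)) E]
    [IsManifold (𝓡 d) (⊤ : ℕ∞) E]
    (h : ℝ × E → E)
    (hsmooth : ContMDiff (𝓘(ℝ, ℝ).prod (𝓡 d)) (𝓡 d) (⊤ : ℕ∞) h)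
    (hone : ∀ v : E, h (1, v) = v)
    (hmul : ∀ (t s : ℝ) (v : E), h (t, h (s, v)) = h (t * s, v))
    (e₀ : E) (hzero : ∀ v : E, h (0, v) = e₀)
    (hreg : ∀ v : E,
      (mfderiv 𝓘(ℝ, ℝ) (𝓡 d) (fun t : ℝ => h (t, v)) 0) (1 : ℝ) = 0 ↔ v = e₀) :
    ∃ (n : ℕ) (Φ : Diffeomorph (𝓡 d) (𝓡 n) E (EuclideanSpace ℝ (Fin n)) (⊤ : ℕ∞)),
      ∀ (t : ℝ) (v : E), Φ (h (t, v)) = t • Φ v := by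
  set Φ := velocityAtZero (EuclideanSpace ℝ (Fin d)) h
  have hcurve (v : E) : ContMDiff 𝓘(ℝ, ℝ) (𝓡 d) ∞ (fun t : ℝ => h (t, v)) :=
    hsmooth.comp (contMDiff_id.prodMk contMDiff_const)
  have hΦ (t : ℝ) (v : E) : Φ (h (t, v)) = t • Φ v :=
    velocityAtZero_act_eq_smul ((hcurve v).mdifferentiableAt (by simp)) hmul t
  have hcont (v : E) : Tendsto (fun t : ℝ => h (t, v)) (𝓝 0) (𝓝 e₀) :=
    hzero v ▸ (hcurve v).continuous.tendsto 0
  have hlocal : IsLocalDiffeomorph (𝓡 d) (𝓡 d) ∞ Φ :=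
    isLocalDiffeomorph_of_isLocalDiffeomorphAt hsmooth hone hmul hΦ hcont
      (isLocalDiffeomorphAt_velocityAtZero hsmooth hmul hzero hreg)
  obtain ⟨Ψ, he₀Ψ, hΦΨ⟩ := hlocal e₀
  have hinj : Injective Φ := injective_of_injOn_of_mem_nhds hone hmul hΦ hcont
    (Ψ.open_source.mem_nhds he₀Ψ) (Ψ.injOn.congr hΦΨ.symm)
  have hsurj : Surjective Φ := surjective_of_range_mem_nhds_zero hΦ
    ((hreg e₀).2 rfl ▸ hlocal.isOpen_range.mem_nhds (mem_range_self e₀))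
  exact ⟨d, hlocal.diffeomorphOfBijective ⟨hinj, hsurj⟩, hΦ⟩

/-- **Grabowski–Rotkiewicz: regular homogeneity structures are vector spaces.**
A smooth action `h` of the multiplicative monoid `(ℝ, ·)` on a manifold `E` with
`h 0 ≡ e₀` which is regular (the derivative at `t = 0` of `t ↦ h (t, v)` vanishes only
for `v = e₀`) comes from a (unique) real vector space structure on `E`: there is a
diffeomorphism `Φ : E → ℝⁿ` with `Φ (h (t, v)) = t • Φ v`. -/
theorem regular_homogeneity_structure_is_vector_space
    {d : ℕ} {E : Type*} [TopologicalSpace E]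
    [ChartedSpace (EuclideanSpace ℝ (Fin d)) E]
    [IsManifold (𝓡 d) (⊤ : ℕ∞) E]
    [T2Space E] [SecondCountableTopology E] [Nonempty E]
    (h : ℝ × E → E)
    (hsmooth : ContMDiff (𝓘(ℝ, ℝ).prod (𝓡 d)) (𝓡 d) (⊤ : ℕ∞) h)
    (hone : ∀ v : E, h (1, v) = v)
    (hmul : ∀ (t s : ℝ) (v : E), h (t, h (s, v)) = h (t * s, v))
    (e₀ : E) (hzero : ∀ v : E, h (0, v) = e₀)
    (hreg : ∀ v : E,
      (mfderiv 𝓘(ℝ, ℝ) (𝓡 d) (fun t : ℝ => h (t, v)) 0) (1 : ℝ) = 0 ↔ v = e₀) :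
    ∃ (n : ℕ) (Φ : Diffeomorph (𝓡 d) (𝓡 n) E (EuclideanSpace ℝ (Fin n)) (⊤ : ℕ∞)),
      ∀ (t : ℝ) (v : E), Φ (h (t, v)) = t • Φ v :=
  regular_homogeneity_structure_is_vector_space_general h hsmooth hone hmul e₀ hzero hreg
end

section
/- Let V be a finite-dimensional real vector space and let p : V × V → V be a map that is differentiable at (0, 0) and such that V, equipped with p as addition and with the original scalar multiplication of V, satisfies all the axioms of a real vector space (p is associative and commutative, has a neutral element, every element has an inverse, and the distributivity laws t • p(u, v) = p(t • u, t • v) and (s + t) • v = p(s • v, t • v) hold, together with 1 • v = v and (s·t) • v = s • (t • v)). Then p(u, v) = u + v for all u, v ∈ V; i.e., the real vector space structure with a given smooth scalar multiplication is unique. -/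
/-- **Uniqueness of the vector space structure with a given scalar multiplication.**
If `p : V × V → V` is differentiable at `(0,0)` and, together with the original scalar
multiplication of `V`, satisfies all the axioms of a real vector space, then `p` is the
original addition of `V`. -/
theorem addition_unique_of_vector_space_axioms
    {V : Type*} [NormedAddCommGroup V] [NormedSpace ℝ V] [FiniteDimensional ℝ V]
    (p : V × V → V)
    (hdiff : DifferentiableAt ℝ p (0, 0))
    (hassoc : ∀ u v w : V, p (p (u, v), w) = p (u, p (v, w)))
    (hcomm : ∀ u v : V, p (u, v) = p (v, u))
    (z : V) (hneutral : ∀ v : V, p (z, v) = v)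
    (hinv : ∀ v : V, ∃ w : V, p (v, w) = z)
    (hdistrib₁ : ∀ (t : ℝ) (u v : V), t • p (u, v) = p (t • u, t • v))
    (hdistrib₂ : ∀ (s t : ℝ) (v : V), (s + t) • v = p (s • v, t • v))
    (hone : ∀ v : V, (1 : ℝ) • v = v)
    (hmulsmul : ∀ (s t : ℝ) (v : V), (s * t) • v = s • t • v) :
    ∀ u v : V, p (u, v) = u + v := by
  -- p (v, 0) = v
  have hright : ∀ v : V, p (v, 0) = v := by
    intro v
    have := hdistrib₂ 1 0 v
    simpa using this.symm
  have hleft : ∀ v : V, p (0, v) = v := fun v => (hcomm 0 v).trans (hright v)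
  set f := fderiv ℝ p (0, 0) with hf
  have hfd : HasFDerivAt p f (0, 0) := hdiff.hasFDerivAt
  -- p equals its derivative, by homogeneity
  have key : ∀ x : V × V, p x = f x := by
    intro x
    have hc : HasDerivAt (fun t : ℝ => t • x) x 0 := by
      simpa using (hasDerivAt_id (0 : ℝ)).smul_const x
    have hc0 : (fun t : ℝ => t • x) 0 = (0, 0) := by simp [Prod.ext_iff]
    have h2 : HasDerivAt (fun t : ℝ => p (t • x)) (f x) 0 := by
      have hfd' : HasFDerivAt p f ((fun t : ℝ => t • x) 0) := by rw [hc0]; exact hfd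
      exact hfd'.comp_hasDerivAt 0 hc
    have heq : (fun t : ℝ => p (t • x)) = fun t : ℝ => t • p x := by
      funext t
      have := hdistrib₁ t x.1 x.2
      simpa [Prod.smul_def] using this.symm
    rw [heq] at h2
    have h3 : HasDerivAt (fun t : ℝ => t • p x) (p x) 0 := by
      simpa using (hasDerivAt_id (0 : ℝ)).smul_const (p x)
    exact h3.unique h2
  intro u v
  calc p (u, v) = f (u, v) := key _
    _ = f ((u, 0) + (0, v)) := by norm_num
    _ = f (u, 0) + f (0, v) := by rw [map_add]
    _ = p (u, 0) + p (0, v) := by rw [key, key]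
    _ = u + v := by rw [hright, hleft]
end

section
/- Let n ∈ ℕ, w ∈ ℕ, and let f : (Fin n → ℝ) → ℝ be a smooth (C^∞) function satisfying f(t • x) = t^w · f(x) for all t ∈ ℝ and x ∈ (Fin n → ℝ). Then there exists a multivariate polynomial P ∈ MvPolynomial (Fin n) ℝ which is homogeneous of degree w such that f(x) = eval x P for all x. -/
open MvPolynomial

private lemma iteratedDeriv_pow_mul_const (c : ℝ) :
    ∀ (m k : ℕ), iteratedDeriv m (fun t : ℝ => t ^ k * c) =
      fun t : ℝ => (k.descFactorial m : ℝ) * t ^ (k - m) * c := by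
  intro m
  induction m with
  | zero => intro k; simp
  | succ m ih =>
    intro k
    rw [iteratedDeriv_succ, ih k]
    funext t
    rcases Nat.lt_or_ge m k with h | h
    · have hd : HasDerivAt (fun t : ℝ => (k.descFactorial m : ℝ) * t ^ (k - m) * c)
          ((k.descFactorial m : ℝ) * ((k - m : ℕ) * t ^ (k - m - 1)) * c) t := by
        exact (((hasDerivAt_pow (k - m) t).const_mul _).mul_const c)
      rw [hd.deriv]
      have h1 : k - m - 1 = k - (m + 1) := by omega
      rw [h1, Nat.descFactorial_succ]
      push_cast
      ring
    · have h0 : k - m = 0 := by omega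
      have h1 : k - (m + 1) = 0 := by omega
      have h2 : k.descFactorial (m + 1) = 0 := by
        rw [Nat.descFactorial_succ, h0, zero_mul]
      rw [h0, h1, h2]
      simp

/-- **Homogeneous smooth functions are homogeneous polynomials.**
A smooth function `f : ℝⁿ → ℝ` satisfying `f (t • x) = t ^ w * f x` for all reals `t`
is given by a multivariate polynomial which is homogeneous of degree `w`. -/
theorem smooth_homogeneous_is_polynomial
    {n : ℕ} (w : ℕ) (f : (Fin n → ℝ) → ℝ)
    (hsmooth : ContDiff ℝ (⊤ : ℕ∞) f)
    (hhom : ∀ (t : ℝ) (x : Fin n → ℝ), f (t • x) = t ^ w * f x) :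
    ∃ P : MvPolynomial (Fin n) ℝ, P.IsHomogeneous w ∧
      ∀ x : Fin n → ℝ, f x = MvPolynomial.eval x P := by
  classical
  set Φ := iteratedFDeriv ℝ w f 0 with hΦ
  -- basis vectors
  set e : Fin n → (Fin n → ℝ) := fun i j => if i = j then 1 else 0 with he
  -- key identity : w ! * f x = Φ (fun _ => x)
  have key : ∀ x : Fin n → ℝ, (Nat.factorial w : ℝ) * f x = Φ (fun _ => x) := by
    intro x
    have hg : (fun t : ℝ => f (t • x)) = f ∘ (ContinuousLinearMap.toSpanSingleton ℝ x) := by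
      funext t
      simp [ContinuousLinearMap.toSpanSingleton_apply]
    have h1 : iteratedDeriv w (fun t : ℝ => f (t • x)) 0 = Φ (fun _ => x) := by
      rw [hg, iteratedDeriv_eq_iteratedFDeriv,
        ContinuousLinearMap.iteratedFDeriv_comp_right _ hsmooth 0 (by exact_mod_cast (le_top : (w : ℕ∞) ≤ ⊤))]
      simp [ContinuousLinearMap.toSpanSingleton_apply, hΦ]
    have h2 : (fun t : ℝ => f (t • x)) = fun t : ℝ => t ^ w * f x := by
      funext t; exact hhom t x
    rw [h2] at h1
    rw [iteratedDeriv_pow_mul_const (f x) w w] at h1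
    simpa [Nat.descFactorial_self] using h1
  -- expand Φ (fun _ => x) multilinearly
  have expand : ∀ x : Fin n → ℝ, Φ (fun _ => x) =
      ∑ r : Fin w → Fin n, (∏ i, x (r i)) * Φ (fun i => e (r i)) := by
    intro x
    have hx : (fun _ : Fin w => x) = fun _ : Fin w => ∑ j : Fin n, x j • e j := by
      funext i
      exact pi_eq_sum_univ x
    rw [hx]
    rw [Φ.map_sum (g := fun _ j => x j • e j)]
    congr 1
    funext r
    have := Φ.toMultilinearMap.map_smul_univ (fun i => x (r i)) (fun i => e (r i))
    simpa [smul_eq_mul] using this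
  refine ⟨(MvPolynomial.C ((Nat.factorial w : ℝ)⁻¹)) *
      ∑ r : Fin w → Fin n, (MvPolynomial.C (Φ (fun i => e (r i)))) * ∏ i, MvPolynomial.X (r i),
      ?_, ?_⟩
  · refine IsHomogeneous.C_mul ?_ _
    apply IsHomogeneous.sum
    intro r _
    refine IsHomogeneous.C_mul ?_ _
    have := IsHomogeneous.prod Finset.univ (fun i : Fin w => (MvPolynomial.X (r i) : MvPolynomial (Fin n) ℝ)) (fun _ => 1) (fun i _ => isHomogeneous_X _ _)
    simpa using this
  · intro x
    have hkey := key x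
    have hfac : (Nat.factorial w : ℝ) ≠ 0 := Nat.cast_ne_zero.mpr (Nat.factorial_ne_zero w)
    rw [expand x] at hkey
    have : f x = (Nat.factorial w : ℝ)⁻¹ * ∑ r : Fin w → Fin n, (∏ i, x (r i)) * Φ (fun i => e (r i)) := by
      field_simp at hkey ⊢
      linarith [hkey]
    rw [this]
    simp only [map_mul, map_sum, eval_C, eval_prod, eval_X]
    congr 1
    exact Finset.sum_congr rfl fun r _ => by ring
end

section
/- Let w : Fin n → ℕ and w' : Fin n' → ℕ be weights with w i ≥ 1 and w' j ≥ 1 for all i, j, and let h^w and h^{w'} denote the corresponding weighted dilation actions on ℝⁿ and ℝ^{n'}. Let Φ : (Fin n → ℝ) → (Fin n' → ℝ) be a smooth (C^∞) map which is equivariant: Φ(h^w(t, x)) = h^{w'}(t, Φ(x)) for all t ∈ ℝ and x. Then Φ is polynomial: for every j : Fin n' there exists P_j ∈ MvPolynomial (Fin n) ℝ with (Φ x) j = eval x P_j for all x, and every monomial μ in the support of P_j has weighted degree ∑ i, (μ i) · (w i) = w' j. (In particular, any graded bundle is a polynomial bundle.) -/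
open Filter Topology Set Polynomial

private lemma multilinear_expand {n m : ℕ}
    (D : ContinuousMultilinearMap ℝ (fun _ : Fin m => (Fin n → ℝ)) ℝ) (y : Fin n → ℝ) :
    D (fun _ => y) = ∑ r : Fin m → Fin n,
      (∏ l, y (r l)) * D (fun l => (Pi.single (r l) 1 : Fin n → ℝ)) := by
  classical
  have hy : (fun _ : Fin m => y)
      = fun _ : Fin m => ∑ i : Fin n, y i • (Pi.single i 1 : Fin n → ℝ) := by
    funext l
    funext j'
    simp [Pi.single_apply]
  rw [hy]
  have h1' : D (fun _ : Fin m => ∑ i : Fin n, y i • (Pi.single i 1 : Fin n → ℝ))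
      = ∑ r : Fin m → Fin n, D (fun l => y (r l) • (Pi.single (r l) 1 : Fin n → ℝ)) :=
    D.toMultilinearMap.map_sum
      (g := fun (_ : Fin m) (i : Fin n) => y i • (Pi.single i 1 : Fin n → ℝ))
  rw [h1']
  refine Finset.sum_congr rfl fun r _ => ?_
  have := D.toMultilinearMap.map_smul_univ (fun l => y (r l))
    (fun l => (Pi.single (r l) 1 : Fin n → ℝ))
  simpa [smul_eq_mul] using this

private lemma iteratedDerivWithin_eq_of_smooth {f : ℝ → ℝ} (hf : ContDiff ℝ (⊤:ℕ∞) f)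
    {s : Set ℝ} (hs : UniqueDiffOn ℝ s) {x : ℝ} (hx : x ∈ s) (m : ℕ) :
    iteratedDerivWithin m f s x = iteratedDeriv m f x := by
  rw [iteratedDerivWithin_eq_iteratedFDerivWithin, iteratedDeriv_eq_iteratedFDeriv]
  congr 1
  have h := (contDiff_iff_ftaylorSeries.mp hf).hasFTaylorSeriesUpToOn s
  exact (h.eq_iteratedFDerivWithin_of_uniqueDiffOn (by exact_mod_cast le_top) hs hx).symm

private lemma aux_coeff_zero : ∀ (k : ℕ) (p : Polynomial ℝ),
    Tendsto (fun t : ℝ => p.eval t / t ^ k) (𝓝[>] (0:ℝ)) (𝓝 0) →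
    ∀ d ≤ k, p.coeff d = 0 := by
  intro k
  induction k with
  | zero =>
    intro p hp d hd
    obtain rfl : d = 0 := Nat.le_zero.mp hd
    rw [Polynomial.coeff_zero_eq_eval_zero]
    have h1 : Tendsto (fun t : ℝ => p.eval t) (𝓝[>] (0:ℝ)) (𝓝 (p.eval 0)) :=
      (p.continuous.tendsto 0).mono_left nhdsWithin_le_nhds
    have h2 : Tendsto (fun t : ℝ => p.eval t) (𝓝[>] (0:ℝ)) (𝓝 0) := by
      simpa using hp
    exact tendsto_nhds_unique h1 h2
  | succ k ih =>
    intro p hp d hd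
    have h0 : Tendsto (fun t : ℝ => p.eval t) (𝓝[>] (0:ℝ)) (𝓝 0) := by
      have hmul : Tendsto (fun t : ℝ => p.eval t / t ^ (k+1) * t ^ (k+1))
          (𝓝[>] (0:ℝ)) (𝓝 0) := by
        have hpow : Tendsto (fun t : ℝ => t ^ (k+1)) (𝓝[>] (0:ℝ)) (𝓝 0) := by
          have := (continuous_pow (k+1) (M := ℝ)).tendsto 0
          simpa using this.mono_left (nhdsWithin_le_nhds)
        simpa using hp.mul hpow
      refine hmul.congr' ?_
      filter_upwards [self_mem_nhdsWithin] with t ht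
      have ht' : t ≠ 0 := ne_of_gt ht
      field_simp
    have hc0 : p.coeff 0 = 0 := by
      rw [Polynomial.coeff_zero_eq_eval_zero]
      exact tendsto_nhds_unique
        ((p.continuous.tendsto 0).mono_left nhdsWithin_le_nhds) h0
    have hdiv : Tendsto (fun t : ℝ => (p.divX).eval t / t ^ k) (𝓝[>] (0:ℝ)) (𝓝 0) := by
      refine hp.congr' ?_
      filter_upwards [self_mem_nhdsWithin] with t ht
      have ht' : (t:ℝ) ≠ 0 := ne_of_gt ht
      have hX : p.eval t = t * (p.divX).eval t := by
        conv_lhs => rw [← Polynomial.X_mul_divX_add p]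
        simp [hc0]
      rw [hX]
      field_simp
      ring
    have ihp := ih p.divX hdiv
    rcases d with _ | e
    · exact hc0
    · have : e ≤ k := Nat.succ_le_succ_iff.mp hd
      have := ihp e this
      rwa [Polynomial.coeff_divX] at this

private lemma norm_dil_le {n : ℕ} (y : Fin n → ℝ) {t : ℝ} (ht : t ∈ Set.Ioc (0:ℝ) 1)
    (w : Fin n → ℕ) (hw : ∀ i, 1 ≤ w i) :
    ‖(fun i => t ^ w i * y i : Fin n → ℝ)‖ ≤ t * ‖y‖ := by
  obtain ⟨ht0, ht1⟩ := ht
  refine (pi_norm_le_iff_of_nonneg (by positivity)).2 fun i => ?_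
  have h1 : t ^ w i ≤ t := by
    calc t ^ w i ≤ t ^ 1 := pow_le_pow_of_le_one ht0.le ht1 (hw i)
    _ = t := pow_one t
  have h2 : |y i| ≤ ‖y‖ := norm_le_pi_norm y i
  calc ‖t ^ w i * y i‖ = t ^ w i * |y i| := by
        rw [norm_mul, Real.norm_eq_abs, abs_of_nonneg (by positivity)]; rfl
  _ ≤ t * ‖y‖ := mul_le_mul h1 h2 (abs_nonneg _) ht0.le

/-- **Graded bundles are polynomial bundles (local statement).**
A smooth map `Φ : ℝⁿ → ℝⁿ'` equivariant with respect to weighted dilation actions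
(with all weights positive) is componentwise polynomial, each component being a
weighted-homogeneous polynomial of the appropriate weighted degree. -/
theorem equivariant_smooth_map_is_polynomial
    {n n' : ℕ} (w : Fin n → ℕ) (w' : Fin n' → ℕ)
    (hw : ∀ i, 1 ≤ w i) (hw' : ∀ j, 1 ≤ w' j)
    (Φ : (Fin n → ℝ) → (Fin n' → ℝ))
    (hsmooth : ContDiff ℝ (⊤ : ℕ∞) Φ)
    (hequiv : ∀ (t : ℝ) (x : Fin n → ℝ),
      Φ (fun i => t ^ (w i) * x i) = fun j => t ^ (w' j) * Φ x j) :
    ∀ j : Fin n', ∃ P : MvPolynomial (Fin n) ℝ,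
      (∀ x : Fin n → ℝ, Φ x j = MvPolynomial.eval x P) ∧
      ∀ μ ∈ P.support, ∑ i, (μ i) * (w i) = w' j := by
  classical
  intro j
  set k := w' j with hkdef
  have hk1 : 1 ≤ k := hw' j
  have hΦj : ContDiff ℝ (⊤:ℕ∞) (fun v => Φ v j) :=
    contDiff_pi.mp (hsmooth.of_le (by simp)) j
  set Φj : (Fin n → ℝ) → ℝ := fun v => Φ v j with hΦjdef
  set A : ∀ m : ℕ, (Fin m → Fin n) → ℝ :=
    fun m r => iteratedFDeriv ℝ m Φj 0 (fun l => (Pi.single (r l) 1 : Fin n → ℝ)) with hA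
  refine ⟨∑ m ∈ Finset.range (k+1), ∑ r : Fin m → Fin n,
      if (∑ l, w (r l)) = k then
        MvPolynomial.monomial (∑ l, Finsupp.single (r l) 1) (((Nat.factorial m : ℕ) : ℝ)⁻¹ * A m r)
      else 0, ?_, ?_⟩
  · -- evaluation statement
    intro x
    set c : ℝ := Φ x j with hc
    set y : ℝ → (Fin n → ℝ) := fun t => fun i => t ^ w i * x i with hy
    set p : Polynomial ℝ := Polynomial.C c * Polynomial.X ^ k -
        ∑ m ∈ Finset.range (k+1), ∑ r : Fin m → Fin n,
          Polynomial.C (((Nat.factorial m : ℕ) : ℝ)⁻¹ * A m r * ∏ l, x (r l)) *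
            Polynomial.X ^ (∑ l, w (r l)) with hp
    -- Step 1: Lagrange remainder identity
    have key : ∀ t : ℝ, t ∈ Set.Ioc (0:ℝ) 1 → ∃ z : Fin n → ℝ, ‖z‖ ≤ t * ‖x‖ ∧
        Polynomial.eval t p = ((Nat.factorial k : ℕ) : ℝ)⁻¹ *
          ((iteratedFDeriv ℝ k Φj z) (fun _ => y t)
            - iteratedFDeriv ℝ k Φj 0 (fun _ => y t)) := by
      intro t ht
      set L : ℝ →L[ℝ] (Fin n → ℝ) := (ContinuousLinearMap.id ℝ ℝ).smulRight (y t) with hLdef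
      have hL : ∀ s : ℝ, L s = s • y t := fun s => rfl
      have hfs : ContDiff ℝ (⊤:ℕ∞) (Φj ∘ L) := hΦj.comp L.contDiff
      have hder : ∀ (m : ℕ) (u : ℝ),
          iteratedDeriv m (Φj ∘ L) u = iteratedFDeriv ℝ m Φj (u • y t) (fun _ => y t) := by
        intro m u
        rw [iteratedDeriv_eq_iteratedFDeriv,
          L.iteratedFDeriv_comp_right hΦj u (by exact_mod_cast le_top)]
        simp only [ContinuousMultilinearMap.compContinuousLinearMap_apply]
        rw [hL u]
        congr 1
        funext l
        rw [hL 1, one_smul]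
      have hud : UniqueDiffOn ℝ (Set.Icc (0:ℝ) 1) := uniqueDiffOn_Icc one_pos
      obtain ⟨k', hk'⟩ : ∃ k', k = k' + 1 := ⟨k - 1, (Nat.succ_pred_eq_of_pos hk1).symm⟩
      have hcd : ContDiffOn ℝ (k' : ℕ) (Φj ∘ L) (Set.Icc 0 1) :=
        hfs.contDiffOn.of_le (by exact_mod_cast le_top)
      have hdiff : DifferentiableOn ℝ (iteratedDerivWithin k' (Φj ∘ L) (Set.Icc 0 1))
          (Set.Ioo 0 1) := by
        have hdi : Differentiable ℝ (iteratedDeriv k' (Φj ∘ L)) :=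
          hfs.differentiable_iteratedDeriv k'
            (by exact_mod_cast WithTop.coe_lt_coe.2 (WithTop.coe_lt_top k'))
        refine hdi.differentiableOn.congr fun u hu => ?_
        exact iteratedDerivWithin_eq_of_smooth hfs hud (Set.Ioo_subset_Icc_self hu) k'
      obtain ⟨s', hs', hTay⟩ : ∃ x' ∈ Set.Ioo (0:ℝ) 1, (Φj ∘ L) 1 - taylorWithinEval (Φj ∘ L) k' (Set.Icc 0 1) 0 1 =
          iteratedDerivWithin (k' + 1) (Φj ∘ L) (Set.Icc 0 1) x' * (1 - 0) ^ (k' + 1) / ((Nat.factorial (k' + 1) : ℕ) : ℝ) := by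
        have h := taylor_mean_remainder_lagrange (x₀ := (0:ℝ)) (x := 1) (n := k') zero_ne_one
          (by rw [Set.uIcc_of_le zero_le_one]; exact hcd)
          (by rw [Set.uIcc_of_le zero_le_one, Set.uIoo_of_le zero_le_one]; exact hdiff)
        rwa [Set.uIcc_of_le zero_le_one, Set.uIoo_of_le zero_le_one] at h
      have hterm : ∀ m : ℕ, iteratedDerivWithin m (Φj ∘ L) (Set.Icc 0 1) 0
          = iteratedFDeriv ℝ m Φj 0 (fun _ => y t) := by
        intro m
        rw [iteratedDerivWithin_eq_of_smooth hfs hud (by norm_num) m, hder m 0, zero_smul]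
      have hf1 : (Φj ∘ L) 1 = t ^ k * c := by
        have h := congrFun (hequiv t x) j
        show Φj (L 1) = t ^ k * c
        rw [hL 1, one_smul]
        exact h
      have h2 : taylorWithinEval (Φj ∘ L) k' (Set.Icc 0 1) 0 1
          = ∑ m ∈ Finset.range k, ((Nat.factorial m : ℕ) : ℝ)⁻¹ *
              iteratedFDeriv ℝ m Φj 0 (fun _ => y t) := by
        rw [taylor_within_apply, ← hk']
        refine Finset.sum_congr rfl fun m _ => ?_
        rw [hterm m]
        simp [smul_eq_mul]
      have h3 : iteratedDerivWithin (k'+1) (Φj ∘ L) (Set.Icc 0 1) s'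
          = iteratedFDeriv ℝ k Φj (s' • y t) (fun _ => y t) := by
        rw [iteratedDerivWithin_eq_of_smooth hfs hud (Set.Ioo_subset_Icc_self hs') (k'+1),
          ← hk', hder k s']
      rw [h2, h3, hf1] at hTay
      have hyt : ‖y t‖ ≤ t * ‖x‖ := by
        have := norm_dil_le x ht w hw
        simpa [hy] using this
      refine ⟨s' • y t, ?_, ?_⟩
      · calc ‖s' • y t‖ = |s'| * ‖y t‖ := by rw [norm_smul, Real.norm_eq_abs]
          _ ≤ 1 * (t * ‖x‖) :=
            mul_le_mul (by rw [abs_of_pos hs'.1]; exact hs'.2.le) hyt (norm_nonneg _)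
              zero_le_one
          _ = t * ‖x‖ := one_mul _
      · have heval : Polynomial.eval t p = c * t ^ k -
            ∑ m ∈ Finset.range (k+1), ((Nat.factorial m : ℕ) : ℝ)⁻¹ *
              iteratedFDeriv ℝ m Φj 0 (fun _ => y t) := by
          rw [hp]
          simp only [Polynomial.eval_sub, Polynomial.eval_mul, Polynomial.eval_C,
            Polynomial.eval_pow, Polynomial.eval_X, Polynomial.eval_finset_sum]
          congr 1
          refine Finset.sum_congr rfl fun m _ => ?_
          rw [multilinear_expand (iteratedFDeriv ℝ m Φj 0) (y t), Finset.mul_sum]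
          refine Finset.sum_congr rfl fun r _ => ?_
          have hyy : ∏ l, y t (r l) = t ^ (∑ l, w (r l)) * ∏ l, x (r l) := by
            rw [← Finset.prod_pow_eq_pow_sum, ← Finset.prod_mul_distrib]
          rw [hyy, hA]
          ring
        rw [heval, Finset.sum_range_succ]
        have hfk : ((Nat.factorial k : ℕ) : ℝ) ≠ 0 := by
          exact_mod_cast (Nat.factorial_pos k).ne'
        have h4 : (1 - 0 : ℝ) ^ (k' + 1) = 1 := by norm_num
        rw [h4] at hTay
        rw [← hk'] at hTay
        have : c * t ^ k - ∑ m ∈ Finset.range k, ((Nat.factorial m : ℕ) : ℝ)⁻¹ *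
            iteratedFDeriv ℝ m Φj 0 (fun _ => y t)
            = iteratedFDeriv ℝ k Φj (s' • y t) (fun _ => y t) / ((Nat.factorial k : ℕ) : ℝ) := by
          rw [mul_comm c (t ^ k)]
          simpa using hTay
        rw [← sub_sub, this, div_eq_inv_mul, ← mul_sub]
    -- Step 2: little-o estimate
    have hten : Tendsto (fun t : ℝ => Polynomial.eval t p / t ^ k) (𝓝[>] (0:ℝ)) (𝓝 0) := by
      rw [Metric.tendsto_nhdsWithin_nhds]
      intro ε hε
      have hcont : Continuous (iteratedFDeriv ℝ k Φj) :=
        hΦj.continuous_iteratedFDeriv (by exact_mod_cast le_top)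
      set B : ℝ := ‖x‖ ^ k + 1 with hB
      have hB0 : 0 < B := by positivity
      have hε' : 0 < ε / B := by positivity
      obtain ⟨δ₁, hδ₁, hδ⟩ := Metric.continuous_iff.1 hcont 0 (ε/B) hε'
      refine ⟨min 1 (δ₁ / (‖x‖ + 1)), by positivity, fun t htpos htd => ?_⟩
      have ht0 : (0:ℝ) < t := htpos
      have htabs : |t| < min 1 (δ₁ / (‖x‖ + 1)) := by
        simpa [Real.dist_eq] using htd
      have ht1 : t ≤ 1 := by
        have := lt_of_abs_lt (lt_of_lt_of_le htabs (min_le_left _ _))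
        linarith
      obtain ⟨z, hz, heq⟩ := key t ⟨ht0, ht1⟩
      have htx : t * ‖x‖ < δ₁ := by
        have h1 : t < δ₁ / (‖x‖ + 1) :=
          lt_of_abs_lt (lt_of_lt_of_le htabs (min_le_right _ _))
        have h2 : t * ‖x‖ ≤ t * (‖x‖ + 1) := by nlinarith [norm_nonneg x]
        have h3 : t * (‖x‖ + 1) < δ₁ := by
          rw [lt_div_iff₀ (by positivity)] at h1
          linarith
        linarith
      have hFz : ‖iteratedFDeriv ℝ k Φj z - iteratedFDeriv ℝ k Φj 0‖ < ε / B := by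
        have := hδ (a := z) (by simpa [dist_eq_norm] using lt_of_le_of_lt hz htx)
        rwa [dist_eq_norm] at this
      have hyt : ‖y t‖ ≤ t * ‖x‖ := by
        simpa [hy] using norm_dil_le x ⟨ht0, ht1⟩ w hw
      have hb1 : |(iteratedFDeriv ℝ k Φj z - iteratedFDeriv ℝ k Φj 0) (fun _ => y t)|
          ≤ ‖iteratedFDeriv ℝ k Φj z - iteratedFDeriv ℝ k Φj 0‖ * ‖y t‖ ^ k := by
        have := ContinuousMultilinearMap.le_opNorm
          (iteratedFDeriv ℝ k Φj z - iteratedFDeriv ℝ k Φj 0) (fun _ => y t)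
        simpa [Finset.prod_const, Real.norm_eq_abs] using this
      have hb2 : ‖y t‖ ^ k ≤ t ^ k * ‖x‖ ^ k := by
        rw [← mul_pow]
        exact pow_le_pow_left₀ (norm_nonneg _) hyt k
      have heq' : Polynomial.eval t p = ((Nat.factorial k : ℕ) : ℝ)⁻¹ *
          ((iteratedFDeriv ℝ k Φj z - iteratedFDeriv ℝ k Φj 0) (fun _ => y t)) := by
        rw [heq]
        simp [ContinuousMultilinearMap.sub_apply]
      have hinv : ((Nat.factorial k : ℕ) : ℝ)⁻¹ ≤ 1 := by
        rw [inv_le_one_iff₀]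
        right
        exact_mod_cast Nat.one_le_iff_ne_zero.2 (Nat.factorial_pos k).ne'
      have hnum : |Polynomial.eval t p| ≤ (ε / B) * (t ^ k * ‖x‖ ^ k) := by
        rw [heq', abs_mul, abs_of_nonneg (by positivity : (0:ℝ) ≤ ((Nat.factorial k : ℕ) : ℝ)⁻¹)]
        calc ((Nat.factorial k : ℕ) : ℝ)⁻¹ *
              |(iteratedFDeriv ℝ k Φj z - iteratedFDeriv ℝ k Φj 0) (fun _ => y t)|
            ≤ 1 * ((ε / B) * (t ^ k * ‖x‖ ^ k)) := by
              refine mul_le_mul hinv ?_ (abs_nonneg _) zero_le_one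
              exact le_trans hb1 (mul_le_mul hFz.le hb2 (by positivity) hε'.le)
          _ = (ε / B) * (t ^ k * ‖x‖ ^ k) := one_mul _
      have htk : (0:ℝ) < t ^ k := pow_pos ht0 k
      rw [Real.dist_eq, sub_zero, abs_div, abs_of_pos htk]
      calc |Polynomial.eval t p| / t ^ k ≤ ((ε / B) * (t ^ k * ‖x‖ ^ k)) / t ^ k := by
            gcongr
        _ = (ε / B) * ‖x‖ ^ k := by
            field_simp
        _ < ε := by
            have hxB : ‖x‖ ^ k < B := by rw [hB]; linarith
            calc (ε / B) * ‖x‖ ^ k < (ε / B) * B := by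
                  exact mul_lt_mul_of_pos_left hxB hε'
              _ = ε := div_mul_cancel₀ ε hB0.ne'
    -- Step 3: extract coefficient k
    have hcoeff := aux_coeff_zero k p hten k le_rfl
    have hck : c = ∑ m ∈ Finset.range (k+1), ∑ r : Fin m → Fin n,
        (if (∑ l, w (r l)) = k then
          ((Nat.factorial m : ℕ) : ℝ)⁻¹ * A m r * ∏ l, x (r l) else 0) := by
      rw [hp] at hcoeff
      simp only [Polynomial.coeff_sub, Polynomial.coeff_C_mul, Polynomial.coeff_X_pow,
        Polynomial.finset_sum_coeff, if_pos rfl, mul_one] at hcoeff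
      rw [sub_eq_zero] at hcoeff
      simp only [if_true, mul_one] at hcoeff
      rw [hcoeff]
      refine Finset.sum_congr rfl fun m _ => Finset.sum_congr rfl fun r _ => ?_
      by_cases h : (∑ l, w (r l)) = k
      · simp [h]
      · simp [h, Ne.symm h]
    have hPev : (MvPolynomial.eval x) (∑ m ∈ Finset.range (k+1), ∑ r : Fin m → Fin n,
        if (∑ l, w (r l)) = k then
          MvPolynomial.monomial (∑ l, Finsupp.single (r l) 1)
            (((Nat.factorial m : ℕ) : ℝ)⁻¹ * A m r)
        else 0)
        = ∑ m ∈ Finset.range (k+1), ∑ r : Fin m → Fin n,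
          (if (∑ l, w (r l)) = k then
            ((Nat.factorial m : ℕ) : ℝ)⁻¹ * A m r * ∏ l, x (r l) else 0) := by
      simp only [map_sum]
      refine Finset.sum_congr rfl fun m _ => Finset.sum_congr rfl fun r _ => ?_
      rw [apply_ite (MvPolynomial.eval x), map_zero, MvPolynomial.eval_monomial]
      by_cases h : (∑ l, w (r l)) = k
      · rw [if_pos h, if_pos h]
        have hfp : ((∑ l, Finsupp.single (r l) 1 : Fin n →₀ ℕ).prod fun i e => x i ^ e)
            = ∏ l, x (r l) := by
          rw [← Finsupp.prod_finset_sum_index (by simp) (fun a b₁ b₂ => pow_add (x a) b₁ b₂)]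
          refine Finset.prod_congr rfl fun l _ => ?_
          rw [Finsupp.prod_single_index (by simp), pow_one]
        rw [hfp, mul_assoc]
      · rw [if_neg h, if_neg h]
    rw [hPev, hc]
    exact hck
  · -- support statement
    intro μ hμ
    have h1 := MvPolynomial.support_sum hμ
    simp only [Finset.mem_biUnion] at h1
    obtain ⟨m, hm, h2⟩ := h1
    have h3 := MvPolynomial.support_sum h2
    simp only [Finset.mem_biUnion] at h3
    obtain ⟨r, -, h4⟩ := h3
    by_cases hcond : (∑ l, w (r l)) = k
    · rw [if_pos hcond, MvPolynomial.support_monomial] at h4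
      by_cases hz : (((Nat.factorial m : ℕ) : ℝ)⁻¹ * A m r) = 0
      · rw [if_pos hz] at h4; exact absurd h4 (by simp)
      · rw [if_neg hz] at h4
        simp only [Finset.mem_singleton] at h4
        subst h4
        calc ∑ i, (∑ l, Finsupp.single (r l) 1 : Fin n →₀ ℕ) i * w i
            = ∑ i, ∑ l, (Finsupp.single (r l) 1 : Fin n →₀ ℕ) i * w i := by
              simp [Finsupp.finset_sum_apply, Finset.sum_mul]
          _ = ∑ l, ∑ i, (Finsupp.single (r l) 1 : Fin n →₀ ℕ) i * w i := Finset.sum_comm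
          _ = ∑ l, w (r l) := by
              refine Finset.sum_congr rfl fun l _ => ?_
              simp [Finsupp.single_apply]
          _ = w' j := hcond
    · rw [if_neg hcond] at h4
      exact absurd h4 (by simp)
end

section
/- Let w : Fin n → ℕ be weights with w i ≥ 1 for all i, let h^w be the corresponding weighted dilation action on ℝⁿ with weight vector field ∇_w(x) i = (w i) · x i, let m ∈ ℕ, and let f : (Fin n → ℝ) → ℝ be smooth (C^∞). Then the following are equivalent: (a) f(h^w(t, x)) = t^m · f(x) for all t ∈ ℝ and all x; (b) f(h^w(t, x)) = t^m · f(x) for all t > 0 and all x; (c) the Euler identity (fderiv ℝ f x)(∇_w(x)) = m · f(x) holds for all x. That is, a smooth function is homogeneous of degree m precisely when ∇_w(f) = m·f. -/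
open Filter Topology


private lemma limit_zero_within {g : ℝ → ℝ} (hg : Continuous g) {s : Set ℝ}
    [NeBot (𝓝[s] (0:ℝ))] (h : ∀ t ∈ s, g t = 0) : g 0 = 0 := by
  have h1 : Tendsto g (𝓝[s] (0:ℝ)) (𝓝 (g 0)) :=
    (hg.tendsto 0).mono_left nhdsWithin_le_nhds
  have h2 : Tendsto g (𝓝[s] (0:ℝ)) (𝓝 0) := by
    refine tendsto_const_nhds.congr' ?_
    filter_upwards [self_mem_nhdsWithin] with t ht
    exact (h t ht).symm
  exact tendsto_nhds_unique h1 h2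

private lemma vanish_key : ∀ (m : ℕ) (ψ : ℝ → ℝ), ContDiff ℝ ((⊤:ℕ∞)) ψ →
    (∀ t, 0 ≤ t → ψ t = 0) → (∀ t, t * deriv ψ t = m * ψ t) → ∀ t, ψ t = 0 := by
  intro m
  induction m with
  | zero =>
    intro ψ hψ h0 hode t
    have hd : Differentiable ℝ ψ := hψ.differentiable (by simp)
    have hcd : Continuous (deriv ψ) := ((contDiff_infty_iff_deriv.mp hψ).2).continuous
    have hz' : ∀ s ∈ ({(0:ℝ)}ᶜ : Set ℝ), deriv ψ s = 0 := by
      intro s hs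
      have := hode s
      simp only [Nat.cast_zero, zero_mul] at this
      rcases mul_eq_zero.mp this with h | h
      · exact absurd h hs
      · exact h
    have hz : ∀ s : ℝ, deriv ψ s = 0 := by
      intro s
      rcases eq_or_ne s 0 with rfl | hs
      · exact limit_zero_within hcd hz'
      · exact hz' s hs
    have := is_const_of_deriv_eq_zero hd hz t 1
    rw [this, h0 1 zero_le_one]
  | succ k ih =>
    intro ψ hψ h0 hode t
    have hd : Differentiable ℝ ψ := hψ.differentiable (by simp)
    have hχs : ContDiff ℝ ((⊤:ℕ∞)) (deriv ψ) := (contDiff_infty_iff_deriv.mp hψ).2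
    have hχd : Differentiable ℝ (deriv ψ) := hχs.differentiable (by simp)
    have hχpos : ∀ s ∈ Set.Ioi (0:ℝ), deriv ψ s = 0 := by
      intro s hs
      have hev : ψ =ᶠ[𝓝 s] (fun _ => (0:ℝ)) := by
        filter_upwards [Ioi_mem_nhds hs] with u hu
        exact h0 u (le_of_lt hu)
      rw [hev.deriv_eq, deriv_const]
    have hχ0 : ∀ s, 0 ≤ s → deriv ψ s = 0 := by
      intro s hs
      rcases eq_or_lt_of_le hs with rfl | h
      · exact limit_zero_within hχs.continuous hχpos
      · exact hχpos s h
    have hχode : ∀ s, s * deriv (deriv ψ) s = k * deriv ψ s := by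
      intro s
      have hL : HasDerivAt (fun u => u * deriv ψ u)
          (1 * deriv ψ s + s * deriv (deriv ψ) s) s :=
        (hasDerivAt_id s).mul ((hχd s).hasDerivAt)
      have hR : HasDerivAt (fun u => ((k+1 : ℕ) : ℝ) * ψ u)
          (((k+1 : ℕ) : ℝ) * deriv ψ s) s := ((hd s).hasDerivAt).const_mul _
      have heq : (fun u => u * deriv ψ u) = fun u => ((k+1 : ℕ) : ℝ) * ψ u := by
        funext u; exact hode u
      rw [heq] at hL
      have := hL.unique hR
      push_cast at this ⊢
      linarith
    have hχ := ih (deriv ψ) hχs hχ0 hχode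
    have := is_const_of_deriv_eq_zero hd hχ t 1
    rw [this, h0 1 zero_le_one]

private lemma ode_key (m : ℕ) (ψ : ℝ → ℝ) (hψ : ContDiff ℝ ((⊤:ℕ∞)) ψ)
    (hode : ∀ t, t * deriv ψ t = m * ψ t) (h1 : ψ 1 = 0) : ∀ t, ψ t = 0 := by
  have hd : Differentiable ℝ ψ := hψ.differentiable (by simp)
  -- positive side via exponential substitution
  set χ : ℝ → ℝ := fun s => ψ (Real.exp s) * Real.exp (-(m * s)) with hχdef
  have hχderiv : ∀ s, HasDerivAt χ 0 s := by
    intro s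
    have h1' : HasDerivAt (fun s => ψ (Real.exp s))
        (deriv ψ (Real.exp s) * Real.exp s) s :=
      ((hd (Real.exp s)).hasDerivAt).comp s (Real.hasDerivAt_exp s)
    have h2' : HasDerivAt (fun s => Real.exp (-(m * s)))
        (Real.exp (-(m * s)) * (-(m : ℝ))) s := by
      have : HasDerivAt (fun s : ℝ => -(m * s)) (-(m:ℝ)) s := by
        simpa [Pi.neg_def] using ((hasDerivAt_id s).const_mul (m:ℝ)).neg
      exact (Real.hasDerivAt_exp _).comp s this
    have : HasDerivAt (fun s => ψ (Real.exp s) * Real.exp (-(m * s))) _ s := h1'.mul h2'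
    convert this using 1
    have key := hode (Real.exp s)
    have hne : Real.exp s ≠ 0 := (Real.exp_pos s).ne'
    field_simp
    nlinarith [key, Real.exp_pos s, Real.exp_pos (-(m*s))]
  have hχconst : ∀ s, χ s = χ 0 :=
    fun s => is_const_of_deriv_eq_zero (fun u => (hχderiv u).differentiableAt)
      (fun u => (hχderiv u).deriv) s 0
  have hpos : ∀ t, 0 < t → ψ t = 0 := by
    intro t ht
    have := hχconst (Real.log t)
    simp only [hχdef] at this
    rw [Real.exp_log ht] at this
    simp only [mul_zero, neg_zero, Real.exp_zero, mul_one] at this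
    rw [h1] at this
    have := this
    have hpos' : Real.exp (-(m * Real.log t)) > 0 := Real.exp_pos _
    nlinarith [this, hpos']
  have h0' : ∀ t, 0 ≤ t → ψ t = 0 := by
    intro t ht
    rcases eq_or_lt_of_le ht with rfl | h
    · exact limit_zero_within hψ.continuous (s := Set.Ioi (0:ℝ)) hpos
    · exact hpos t h
  exact vanish_key m ψ hψ h0' hode


private lemma gamma_hasDerivAt {n : ℕ} (w : Fin n → ℕ) (x : Fin n → ℝ) (t : ℝ) :
    HasDerivAt (fun t : ℝ => (fun i => t ^ (w i) * x i))
      (fun i => (w i : ℝ) * t ^ (w i - 1) * x i) t := by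
  rw [hasDerivAt_pi]
  intro i
  exact (hasDerivAt_pow (w i) t).mul_const (x i)

private lemma phi_hasDerivAt {n : ℕ} (w : Fin n → ℕ) (f : (Fin n → ℝ) → ℝ)
    (hf : Differentiable ℝ f) (x : Fin n → ℝ) (t : ℝ) :
    HasDerivAt (fun t : ℝ => f (fun i => t ^ (w i) * x i))
      ((fderiv ℝ f (fun i => t ^ (w i) * x i))
        (fun i => (w i : ℝ) * t ^ (w i - 1) * x i)) t := by
  have := (hf _).hasFDerivAt.comp_hasDerivAt t (gamma_hasDerivAt w x t)
  simpa [Function.comp_def] using this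

private lemma b_to_c {n : ℕ} (w : Fin n → ℕ) (m : ℕ) (f : (Fin n → ℝ) → ℝ)
    (hsmooth : ContDiff ℝ (⊤ : ℕ∞) f)
    (hb : ∀ t : ℝ, 0 < t → ∀ x : Fin n → ℝ,
      f (fun i => t ^ (w i) * x i) = t ^ m * f x) :
    ∀ x : Fin n → ℝ, (fderiv ℝ f x) (fun i => (w i : ℝ) * x i) = m * f x := by
  intro x
  have hd := phi_hasDerivAt w f (hsmooth.differentiable (by simp)) x 1
  have hγ1 : (fun i => (1:ℝ) ^ (w i) * x i) = x := by funext i; simp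
  have hγ'1 : (fun i => (w i : ℝ) * (1:ℝ) ^ (w i - 1) * x i)
      = fun i => (w i : ℝ) * x i := by funext i; simp
  rw [hγ1, hγ'1] at hd
  have h2 : HasDerivAt (fun t : ℝ => t ^ m * f x) ((m : ℝ) * f x) 1 := by
    simpa using (hasDerivAt_pow m (1:ℝ)).mul_const (f x)
  have h3 : HasDerivAt (fun t : ℝ => f (fun i => t ^ (w i) * x i)) ((m:ℝ) * f x) 1 := by
    refine h2.congr_of_eventuallyEq ?_
    filter_upwards [Ioi_mem_nhds (zero_lt_one)] with t ht
    exact hb t ht x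
  exact hd.unique h3

private lemma c_to_a {n : ℕ} (w : Fin n → ℕ) (hw : ∀ i, 1 ≤ w i) (m : ℕ)
    (f : (Fin n → ℝ) → ℝ) (hsmooth : ContDiff ℝ (⊤ : ℕ∞) f)
    (hc : ∀ x : Fin n → ℝ, (fderiv ℝ f x) (fun i => (w i : ℝ) * x i) = m * f x) :
    ∀ (t : ℝ) (x : Fin n → ℝ), f (fun i => t ^ (w i) * x i) = t ^ m * f x := by
  intro t x
  set ψ : ℝ → ℝ := fun u => f (fun i => u ^ (w i) * x i) - u ^ m * f x with hψdef
  have hdf : Differentiable ℝ f := hsmooth.differentiable (by simp)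
  have hψs : ContDiff ℝ ((⊤:ℕ∞)) ψ := by
    apply ContDiff.sub
    · exact (hsmooth.of_le (by simp)).comp
        (contDiff_pi.mpr fun i => (contDiff_id.pow _).mul contDiff_const)
    · exact (contDiff_id.pow m).mul contDiff_const
  have hψ1 : ψ 1 = 0 := by simp [hψdef]
  have hode : ∀ s : ℝ, s * deriv ψ s = m * ψ s := by
    intro s
    have hD : HasDerivAt ψ
        ((fderiv ℝ f (fun i => s ^ (w i) * x i))
          (fun i => (w i : ℝ) * s ^ (w i - 1) * x i) - (m:ℝ) * s ^ (m-1) * f x) s :=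
      (phi_hasDerivAt w f hdf x s).sub ((hasDerivAt_pow m s).mul_const (f x))
    rw [hD.deriv]
    have hmap : s • (fun i => (w i : ℝ) * s ^ (w i - 1) * x i)
        = fun i => (w i : ℝ) * (s ^ (w i) * x i) := by
      funext i
      obtain ⟨k, hk⟩ := Nat.exists_eq_add_of_le (hw i)
      simp only [Pi.smul_apply, smul_eq_mul, hk]
      have : s ^ (1 + k) = s * s ^ (1 + k - 1) := by
        rw [Nat.add_sub_cancel_left, add_comm, pow_succ']
      rw [this, Nat.add_sub_cancel_left]
      ring
    have key : s * (fderiv ℝ f (fun i => s ^ (w i) * x i))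
        (fun i => (w i : ℝ) * s ^ (w i - 1) * x i)
        = (m:ℝ) * f (fun i => s ^ (w i) * x i) := by
      rw [show s * (fderiv ℝ f (fun i => s ^ (w i) * x i))
          (fun i => (w i : ℝ) * s ^ (w i - 1) * x i)
        = (fderiv ℝ f (fun i => s ^ (w i) * x i))
          (s • fun i => (w i : ℝ) * s ^ (w i - 1) * x i) by rw [map_smul]; rfl]
      rw [hmap]
      exact hc _
    have hpow : s * ((m:ℝ) * s ^ (m-1) * f x) = (m:ℝ) * (s ^ m * f x) := by
      cases m with
      | zero => simp
      | succ k =>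
        have : s ^ (k+1) = s * s ^ (k+1-1) := by rw [Nat.add_sub_cancel, pow_succ']
        rw [this, Nat.add_sub_cancel]; ring
    simp only [hψdef]
    rw [mul_sub, key, hpow, mul_sub]
  have := ode_key m ψ hψs hode hψ1 t
  simp only [hψdef] at this
  linarith


/-- **Homogeneity and the weight vector field.**
For a smooth function `f : ℝⁿ → ℝ` and a weighted dilation action `h^w` with positive
weights `w`, the following are equivalent:
(a) `f` is homogeneous of degree `m` with respect to `h^w` (for all real `t`);
(b) `f` is homogeneous of degree `m` with respect to `h^w` for all `t > 0`;
(c) the Euler identity `∇_w(f) = m • f` holds, where `∇_w(x) i = w i * x i` is the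
weight vector field. -/
theorem homogeneous_iff_weight_vector_field
    {n : ℕ} (w : Fin n → ℕ) (hw : ∀ i, 1 ≤ w i) (m : ℕ)
    (f : (Fin n → ℝ) → ℝ) (hsmooth : ContDiff ℝ (⊤ : ℕ∞) f) :
    ((∀ (t : ℝ) (x : Fin n → ℝ), f (fun i => t ^ (w i) * x i) = t ^ m * f x) ↔
      (∀ t : ℝ, 0 < t → ∀ x : Fin n → ℝ, f (fun i => t ^ (w i) * x i) = t ^ m * f x)) ∧
    ((∀ t : ℝ, 0 < t → ∀ x : Fin n → ℝ, f (fun i => t ^ (w i) * x i) = t ^ m * f x) ↔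
      (∀ x : Fin n → ℝ, (fderiv ℝ f x) (fun i => (w i : ℝ) * x i) = m * f x)) := by
  constructor
  · constructor
    · intro ha t _ x; exact ha t x
    · intro hb t x
      exact c_to_a w hw m f hsmooth (b_to_c w m f hsmooth hb) t x
  · constructor
    · exact b_to_c w m f hsmooth
    · intro hc t _ x
      exact c_to_a w hw m f hsmooth hc t x
end

section
/- Let w : Fin n → ℕ and w' : Fin n' → ℕ be weights with w i ≥ 1 and w' j ≥ 1 for all i, j, let h^w, h^{w'} be the corresponding weighted dilation actions on ℝⁿ and ℝ^{n'}, and let ∇_w, ∇_{w'} be their weight vector fields. Let Φ : (Fin n → ℝ) → (Fin n' → ℝ) be smooth (C^∞). Then Φ is a morphism of graded spaces, i.e. Φ(h^w(t, x)) = h^{w'}(t, Φ(x)) for all t ∈ ℝ and x, if and only if Φ relates the weight vector fields: (fderiv ℝ Φ x)(∇_w(x)) = ∇_{w'}(Φ(x)) for all x. -/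
/-- Solutions of `y' = m y` are exponentials. -/
lemma aux_exp_ode {m : ℝ} {y : ℝ → ℝ} (hy : ∀ s, HasDerivAt y (m * y s) s) (s : ℝ) :
    y s = y 0 * Real.exp (m * s) := by
  have hg : ∀ u : ℝ, HasDerivAt (fun u => y u * Real.exp (-(m * u))) 0 u := by
    intro u
    have h1 : HasDerivAt (fun u : ℝ => -(m * u)) (-m) u := by
      simpa [Pi.neg_def] using ((hasDerivAt_id u).const_mul m).neg
    have := (hy u).mul h1.exp
    refine this.congr_deriv ?_
    ring
  have hconst : ∀ u v : ℝ, y u * Real.exp (-(m * u)) = y v * Real.exp (-(m * v)) :=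
    is_const_of_deriv_eq_zero (fun u => (hg u).differentiableAt)
      (fun u => (hg u).deriv)
  have h := hconst s 0
  simp only [mul_zero, neg_zero, Real.exp_zero, mul_one] at h
  have := congrArg (· * Real.exp (m * s)) h
  simpa [mul_assoc, ← Real.exp_add] using this

/-- If a smooth function vanishes on `[0, ∞)`, so does its derivative. -/
lemma aux_deriv_zero_on_Ici {e : ℝ → ℝ} (he : ContDiff ℝ (⊤ : ℕ∞) e)
    (h0 : ∀ t, 0 ≤ t → e t = 0) : ∀ t, 0 ≤ t → deriv e t = 0 := by
  have hcont : Continuous (deriv e) := ((contDiff_infty_iff_deriv.mp he).2).continuous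
  have hIoi : Set.EqOn (deriv e) 0 (Set.Ioi (0:ℝ)) := by
    intro t ht
    have hev : e =ᶠ[nhds t] (fun _ => (0:ℝ)) := by
      filter_upwards [Ioi_mem_nhds (Set.mem_Ioi.mp ht)] with u hu
      exact h0 u (le_of_lt hu)
    have := hev.deriv_eq
    simpa using this
  have := hIoi.closure hcont continuous_const
  rw [closure_Ioi] at this
  intro t ht
  exact this ht

/-- A smooth function vanishing on `[0,∞)` and satisfying `t e'(t) = m e(t)` vanishes. -/
lemma aux_flat_ode_zero : ∀ (m : ℕ) (e : ℝ → ℝ), ContDiff ℝ (⊤ : ℕ∞) e →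
    (∀ t, 0 ≤ t → e t = 0) → (∀ t, t * deriv e t = m * e t) → ∀ t, e t = 0 := by
  intro m
  induction m with
  | zero =>
    intro e he h0 hode t
    have hd : ∀ u : ℝ, deriv e u = 0 := by
      have hne : Set.EqOn (deriv e) 0 {(0:ℝ)}ᶜ := by
        intro u hu
        have := hode u
        simp only [Nat.cast_zero, zero_mul] at this
        have hu0 : u ≠ 0 := hu
        exact (mul_eq_zero.mp this).resolve_left hu0
      have hcont : Continuous (deriv e) := ((contDiff_infty_iff_deriv.mp he).2).continuous
      have := hne.closure hcont continuous_const
      rw [(dense_compl_singleton (0:ℝ)).closure_eq] at this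
      intro u; exact this (Set.mem_univ u)
    have := is_const_of_deriv_eq_zero (he.differentiable (by simp)) hd t 0
    rw [this, h0 0 le_rfl]
  | succ m ih =>
    intro e he h0 hode
    have hdiff : Differentiable ℝ e := he.differentiable (by simp)
    have hd : ContDiff ℝ (⊤ : ℕ∞) (deriv e) := (contDiff_infty_iff_deriv.mp he).2
    have hd0 : ∀ t, 0 ≤ t → deriv e t = 0 := aux_deriv_zero_on_Ici he h0
    have hdd : Differentiable ℝ (deriv e) := hd.differentiable (by simp)
    have hdode : ∀ t, t * deriv (deriv e) t = m * deriv e t := by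
      intro t
      have hL : HasDerivAt (fun u => u * deriv e u)
          (1 * deriv e t + t * deriv (deriv e) t) t :=
        (hasDerivAt_id t).mul (hdd t).hasDerivAt
      have hR : HasDerivAt (fun u => ((m:ℝ)+1) * e u) (((m:ℝ)+1) * deriv e t) t :=
        ((hdiff t).hasDerivAt).const_mul _
      have hfun : (fun u => u * deriv e u) = (fun u => ((m:ℝ)+1) * e u) := by
        funext u
        have := hode u
        push_cast at this
        linarith [this]
      rw [hfun] at hL
      have := hL.unique hR
      nlinarith [this]
    have hzero : ∀ t, deriv e t = 0 := ih (deriv e) hd hd0 hdode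
    intro t
    have := is_const_of_deriv_eq_zero hdiff hzero t 0
    rw [this, h0 0 le_rfl]




/-- **Morphisms of graded spaces relate the weight vector fields.**
A smooth map `Φ : ℝⁿ → ℝⁿ'` intertwines weighted dilation actions (with positive
weights) if and only if it relates the corresponding weight vector fields
`∇_w(x) i = w i * x i` and `∇_{w'}(y) j = w' j * y j`. -/
theorem graded_space_morphism_iff_relates_weight_vector_fields
    {n n' : ℕ} (w : Fin n → ℕ) (w' : Fin n' → ℕ)
    (hw : ∀ i, 1 ≤ w i) (hw' : ∀ j, 1 ≤ w' j)
    (Φ : (Fin n → ℝ) → (Fin n' → ℝ))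
    (hsmooth : ContDiff ℝ (⊤ : ℕ∞) Φ) :
    (∀ (t : ℝ) (x : Fin n → ℝ),
        Φ (fun i => t ^ (w i) * x i) = fun j => t ^ (w' j) * Φ x j) ↔
    (∀ x : Fin n → ℝ,
        (fderiv ℝ Φ x) (fun i => (w i : ℝ) * x i) = fun j => (w' j : ℝ) * Φ x j) := by
  have hPhiInf : ContDiff ℝ (⊤ : ℕ∞) Φ := hsmooth.of_le (by simp)
  have hdiffΦ : Differentiable ℝ Φ := hPhiInf.differentiable (by simp)
  constructor
  · -- forward direction
    intro H x
    have hc1 : (fun i => (1:ℝ) ^ w i * x i) = x := by funext i; simp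
    have hc : HasDerivAt (fun t : ℝ => fun i => t ^ w i * x i)
        (fun i => (w i : ℝ) * x i) 1 := by
      rw [hasDerivAt_pi]
      intro i
      have := (hasDerivAt_pow (w i) (1:ℝ)).mul_const (x i)
      simpa using this
    have hΦx : HasFDerivAt Φ (fderiv ℝ Φ x) (fun i => (1:ℝ) ^ w i * x i) := by
      rw [hc1]; exact (hdiffΦ x).hasFDerivAt
    have h1 : HasDerivAt (Φ ∘ fun t : ℝ => fun i => t ^ w i * x i)
        (fderiv ℝ Φ x (fun i => (w i : ℝ) * x i)) 1 :=
      hΦx.comp_hasDerivAt 1 hc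
    have hfun : (Φ ∘ fun t : ℝ => fun i => t ^ w i * x i)
        = fun t => fun j => t ^ w' j * Φ x j := by
      funext t; exact H t x
    rw [hfun] at h1
    have h2 : HasDerivAt (fun t : ℝ => fun j => t ^ w' j * Φ x j)
        (fun j => (w' j : ℝ) * Φ x j) 1 := by
      rw [hasDerivAt_pi]
      intro j
      have := (hasDerivAt_pow (w' j) (1:ℝ)).mul_const (Φ x j)
      simpa using this
    exact h1.unique h2
  · -- backward direction
    intro hrel t x
    -- Φ 0 = 0
    have hΦ0 : Φ 0 = 0 := by
      have h := hrel 0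
      have h0 : (fun i => (w i : ℝ) * (0 : Fin n → ℝ) i) = 0 := by funext i; simp
      rw [h0, map_zero] at h
      funext j
      have hj := congrFun h.symm j
      simp only [Pi.zero_apply] at hj ⊢
      have hwj : ((w' j : ℝ)) ≠ 0 := by
        exact_mod_cast Nat.one_le_iff_ne_zero.mp (hw' j)
      exact (mul_eq_zero.mp hj).resolve_left hwj
    -- exponential case
    have hexp : ∀ (j : Fin n') (s : ℝ),
        Φ (fun i => Real.exp ((w i : ℝ) * s) * x i) j
          = Φ x j * Real.exp ((w' j : ℝ) * s) := by
      intro j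
      set γ : ℝ → (Fin n → ℝ) := fun s => fun i => Real.exp ((w i : ℝ) * s) * x i with hγdef
      have hy : ∀ s : ℝ, HasDerivAt (fun s => Φ (γ s) j) ((w' j : ℝ) * Φ (γ s) j) s := by
        intro s
        have hγ : HasDerivAt γ (fun i => (w i : ℝ) * γ s i) s := by
          rw [hasDerivAt_pi]
          intro i
          have h1 : HasDerivAt (fun s : ℝ => (w i : ℝ) * s) (w i) s := by
            simpa using (hasDerivAt_id s).const_mul ((w i : ℝ))
          have h2 := (h1.exp).mul_const (x i)
          refine h2.congr_deriv ?_
          simp only [hγdef]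
          ring
        have hcomp : HasDerivAt (Φ ∘ γ)
            (fderiv ℝ Φ (γ s) (fun i => (w i : ℝ) * γ s i)) s :=
          (hdiffΦ (γ s)).hasFDerivAt.comp_hasDerivAt s hγ
        rw [hrel (γ s)] at hcomp
        have hproj := (ContinuousLinearMap.proj (R := ℝ)
          (φ := fun _ : Fin n' => ℝ) j).hasFDerivAt.comp_hasDerivAt s hcomp
        simpa [Function.comp_def] using hproj
      intro s
      have := aux_exp_ode hy s
      have hγ0 : γ 0 = x := by funext i; simp [hγdef]
      rw [hγ0] at this
      exact this
    -- positive t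
    have hpos : ∀ u : ℝ, 0 < u → ∀ j,
        Φ (fun i => u ^ w i * x i) j = u ^ w' j * Φ x j := by
      intro u hu j
      have hcurve : (fun i => Real.exp ((w i : ℝ) * Real.log u) * x i)
          = fun i => u ^ w i * x i := by
        funext i
        rw [Real.exp_nat_mul, Real.exp_log hu]
      have := hexp j (Real.log u)
      rw [hcurve, Real.exp_nat_mul, Real.exp_log hu] at this
      rw [this]; ring
    -- main flat ODE argument
    funext j
    set c : ℝ → (Fin n → ℝ) := fun u => fun i => u ^ w i * x i with hcdef
    set e : ℝ → ℝ := fun u => Φ (c u) j - u ^ w' j * Φ x j with hedef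
    have hcurveSmooth : ContDiff ℝ (⊤ : ℕ∞) c :=
      contDiff_pi.mpr fun i => (contDiff_id.pow _).mul contDiff_const
    have he : ContDiff ℝ (⊤ : ℕ∞) e := by
      have h1 : ContDiff ℝ (⊤ : ℕ∞) (fun u => Φ (c u)) := hPhiInf.comp hcurveSmooth
      have h2 : ContDiff ℝ (⊤ : ℕ∞) (fun u => Φ (c u) j) := contDiff_pi.mp h1 j
      exact h2.sub ((contDiff_id.pow _).mul contDiff_const)
    have h0 : ∀ u : ℝ, 0 ≤ u → e u = 0 := by
      intro u hu
      rcases eq_or_lt_of_le hu with h | h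
      · subst h
        have hc0 : c 0 = 0 := by
          funext i
          simp only [hcdef]
          rw [zero_pow (Nat.one_le_iff_ne_zero.mp (hw i))]
          simp
        simp only [hedef, hc0, hΦ0, Pi.zero_apply,
          zero_pow (Nat.one_le_iff_ne_zero.mp (hw' j))]
        ring
      · simp only [hedef]
        rw [hpos u h j]
        ring
    have hode : ∀ u : ℝ, u * deriv e u = (w' j : ℝ) * e u := by
      intro u
      set c' : Fin n → ℝ := fun i => (w i : ℝ) * u ^ (w i - 1) * x i with hc'def
      have hc' : HasDerivAt c c' u := by
        rw [hasDerivAt_pi]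
        intro i
        have := (hasDerivAt_pow (w i) u).mul_const (x i)
        convert this using 1
      have hΦc : HasDerivAt (fun v => Φ (c v)) (fderiv ℝ Φ (c u) c') u :=
        (hdiffΦ (c u)).hasFDerivAt.comp_hasDerivAt u hc'
      have hΦcj : HasDerivAt (fun v => Φ (c v) j) (fderiv ℝ Φ (c u) c' j) u := by
        have := (ContinuousLinearMap.proj (R := ℝ)
          (φ := fun _ : Fin n' => ℝ) j).hasFDerivAt.comp_hasDerivAt u hΦc
        simpa [Function.comp_def] using this
      have hpow : HasDerivAt (fun v : ℝ => v ^ w' j * Φ x j)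
          ((w' j : ℝ) * u ^ (w' j - 1) * Φ x j) u := by
        have := (hasDerivAt_pow (w' j) u).mul_const (Φ x j)
        convert this using 1
      have hE : HasDerivAt e
          (fderiv ℝ Φ (c u) c' j - (w' j : ℝ) * u ^ (w' j - 1) * Φ x j) u :=
        hΦcj.sub hpow
      rw [hE.deriv]
      -- key identity
      have hsc : u • c' = fun i => (w i : ℝ) * (c u) i := by
        funext i
        simp only [hc'def, hcdef, Pi.smul_apply, smul_eq_mul]
        have hpw : u ^ (w i - 1) * u = u ^ w i := by
          rw [← pow_succ, Nat.sub_add_cancel (hw i)]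
        calc u * ((w i : ℝ) * u ^ (w i - 1) * x i)
            = (w i : ℝ) * ((u ^ (w i - 1) * u) * x i) := by ring
          _ = (w i : ℝ) * (u ^ w i * x i) := by rw [hpw]
      have hkey : u * (fderiv ℝ Φ (c u) c' j) = (w' j : ℝ) * Φ (c u) j := by
        have h1 : fderiv ℝ Φ (c u) (u • c') = u • fderiv ℝ Φ (c u) c' :=
          (fderiv ℝ Φ (c u)).map_smul u c'
        rw [hsc, hrel (c u)] at h1
        have := congrFun h1.symm j
        simpa [smul_eq_mul] using this
      have hupow : u * ((w' j : ℝ) * u ^ (w' j - 1) * Φ x j)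
          = (w' j : ℝ) * (u ^ w' j * Φ x j) := by
        have hpw : u ^ (w' j - 1) * u = u ^ w' j := by
          rw [← pow_succ, Nat.sub_add_cancel (hw' j)]
        calc u * ((w' j : ℝ) * u ^ (w' j - 1) * Φ x j)
            = (w' j : ℝ) * ((u ^ (w' j - 1) * u) * Φ x j) := by ring
          _ = (w' j : ℝ) * (u ^ w' j * Φ x j) := by rw [hpw]
      simp only [hedef]
      rw [mul_sub, hkey, hupow, mul_sub]
    have := aux_flat_ode_zero (w' j) e he h0 hode t
    have he' : e t = Φ (c t) j - t ^ w' j * Φ x j := rfl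
    rw [he'] at this
    have : Φ (c t) j = t ^ w' j * Φ x j := by linarith
    exact this
end

section
/- Let E₁ → M₁ and E₂ → M₂ be smooth real vector bundles with finite-dimensional fibers over finite-dimensional smooth manifolds, and let Φ : TotalSpace E₁ → TotalSpace E₂ be a smooth map between the total spaces which intertwines the fiberwise multiplications by reals: Φ(t • v) = t • Φ(v) for every t ∈ ℝ and every point v of the total space of E₁ (where t • v denotes scalar multiplication in the fiber containing v). Then Φ is a morphism of vector bundles: (i) there exists a smooth map φ : M₁ → M₂ such that π₂ ∘ Φ = φ ∘ π₁, where πᵢ are the bundle projections; and (ii) for every m ∈ M₁ the induced map on fibers (E₁)_m → (E₂)_{φ(m)} determined by Φ is linear. -/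
open Manifold Bundle

/-!
Taking `t = 0` shows that `Φ` sends the whole fiber over `m` to the fiber over
`φ m := π (Φ 0ₘ)`, and `φ = π ∘ Φ ∘ 0` is smooth. In trivializations around `m` and `φ m`,
`Φ` restricted to the fiber over `m` becomes a smooth map `g : F₁ → F₂` with `g (t • w) = t • g w`.
Differentiating `t ↦ g (t • w)` at `t = 0` gives `g w = Dg(0) w`, so `g` is linear.
-/

theorem coe_fderiv_zero_of_map_smul {𝕜 E F : Type*} [NontriviallyNormedField 𝕜]
    [NormedAddCommGroup E] [NormedSpace 𝕜 E] [NormedAddCommGroup F] [NormedSpace 𝕜 F]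
    {g : E → F} (hg : DifferentiableAt 𝕜 g 0) (hsmul : ∀ (t : 𝕜) x, g (t • x) = t • g x) :
    ⇑(fderiv 𝕜 g 0) = g := by
  funext x
  have hline : HasDerivAt (fun t : 𝕜 => t • x) x 0 := by
    simpa using (hasDerivAt_id (0 : 𝕜)).smul_const x
  have hcomp : HasDerivAt (fun t : 𝕜 => g (t • x)) (fderiv 𝕜 g 0 x) 0 := by
    rw [← zero_smul 𝕜 x] at hg
    simpa [Function.comp_def] using hg.hasFDerivAt.comp_hasDerivAt 0 hline
  have hray : HasDerivAt (fun t : 𝕜 => t • g x) (g x) 0 := by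
    simpa using (hasDerivAt_id (0 : 𝕜)).smul_const (g x)
  simp only [hsmul] at hcomp
  exact hcomp.unique hray

namespace Bundle

theorem Trivialization.eq_mk_symm_of_proj_eq {B F : Type*} {E : B → Type*} [TopologicalSpace B]
    [TopologicalSpace F] [TopologicalSpace (TotalSpace F E)] [∀ b, Nonempty (E b)]
    (e : Trivialization F (π F E)) {z : TotalSpace F E} {b : B} (hz : z.proj = b)
    (hb : b ∈ e.baseSet) : z = ⟨b, e.symm b (e z).2⟩ := by
  subst hz
  rw [e.symm_proj_apply z hb]

section Algebraic

variable {𝕜 B₁ B₂ F₁ F₂ : Type*} [NontriviallyNormedField 𝕜]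
  {E₁ : B₁ → Type*} [∀ b, AddCommGroup (E₁ b)] [∀ b, Module 𝕜 (E₁ b)]
  {E₂ : B₂ → Type*} [∀ b, AddCommGroup (E₂ b)] [∀ b, Module 𝕜 (E₂ b)]

variable (𝕜) in
def IntertwinesSMul (Φ : TotalSpace F₁ E₁ → TotalSpace F₂ E₂) : Prop :=
  ∀ (t : 𝕜) (v : TotalSpace F₁ E₁), Φ ⟨v.proj, t • v.2⟩ = ⟨(Φ v).proj, t • (Φ v).2⟩

def baseMap (Φ : TotalSpace F₁ E₁ → TotalSpace F₂ E₂) : B₁ → B₂ :=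
  π F₂ E₂ ∘ Φ ∘ zeroSection F₁ E₁

theorem IntertwinesSMul.proj_apply {Φ : TotalSpace F₁ E₁ → TotalSpace F₂ E₂}
    (hΦ : IntertwinesSMul 𝕜 Φ) (v : TotalSpace F₁ E₁) : (Φ v).proj = baseMap Φ v.proj := by
  have h := hΦ 0 v
  simp only [zero_smul] at h
  simp only [baseMap, Function.comp_apply, zeroSection, h]

end Algebraic

variable {𝕜 : Type*} [NontriviallyNormedField 𝕜] {n : WithTop ℕ∞}

section Fiber

variable {EB HB B F : Type*} [NormedAddCommGroup EB] [NormedSpace 𝕜 EB] [TopologicalSpace HB]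
  {IB : ModelWithCorners 𝕜 EB HB} [TopologicalSpace B] [ChartedSpace HB B]
  [NormedAddCommGroup F] [NormedSpace 𝕜 F]
  {E : B → Type*} [∀ b, AddCommGroup (E b)] [∀ b, Module 𝕜 (E b)] [∀ b, TopologicalSpace (E b)]
  [TopologicalSpace (TotalSpace F E)] [FiberBundle F E] [VectorBundle 𝕜 F E]

theorem contMDiff_mk_trivializationAt_symmL (b : B) :
    ContMDiff 𝓘(𝕜, F) (IB.prod 𝓘(𝕜, F)) n
      fun w : F => TotalSpace.mk' F b ((trivializationAt F E b).symmL 𝕜 b w) := by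
  intro w
  rw [contMDiffAt_totalSpace]
  refine ⟨contMDiffAt_const, contMDiffAt_id.congr_of_eventuallyEq (.of_forall fun w' => ?_)⟩
  have hb := mem_baseSet_trivializationAt F E b
  simp only [← Trivialization.continuousLinearMapAt_apply_of_mem 𝕜 _ hb,
    Trivialization.continuousLinearMapAt_symmL _ hb, id]

end Fiber

section Morphism

variable {EB₁ HB₁ : Type*} [NormedAddCommGroup EB₁] [NormedSpace 𝕜 EB₁] [TopologicalSpace HB₁]
  {IB₁ : ModelWithCorners 𝕜 EB₁ HB₁} {B₁ : Type*} [TopologicalSpace B₁] [ChartedSpace HB₁ B₁]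
  {EB₂ HB₂ : Type*} [NormedAddCommGroup EB₂] [NormedSpace 𝕜 EB₂] [TopologicalSpace HB₂]
  {IB₂ : ModelWithCorners 𝕜 EB₂ HB₂} {B₂ : Type*} [TopologicalSpace B₂] [ChartedSpace HB₂ B₂]
  {F₁ : Type*} [NormedAddCommGroup F₁] [NormedSpace 𝕜 F₁]
  {E₁ : B₁ → Type*} [∀ b, AddCommGroup (E₁ b)] [∀ b, Module 𝕜 (E₁ b)]
  [∀ b, TopologicalSpace (E₁ b)] [TopologicalSpace (TotalSpace F₁ E₁)]
  [FiberBundle F₁ E₁] [VectorBundle 𝕜 F₁ E₁]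
  {F₂ : Type*} [NormedAddCommGroup F₂] [NormedSpace 𝕜 F₂]
  {E₂ : B₂ → Type*} [∀ b, AddCommGroup (E₂ b)] [∀ b, Module 𝕜 (E₂ b)]
  [∀ b, TopologicalSpace (E₂ b)] [TopologicalSpace (TotalSpace F₂ E₂)] [FiberBundle F₂ E₂]
  {Φ : TotalSpace F₁ E₁ → TotalSpace F₂ E₂}

variable (𝕜) in
noncomputable def fiberInCoordinates (Φ : TotalSpace F₁ E₁ → TotalSpace F₂ E₂) (b : B₁) : F₁ → F₂ :=
  fun w => (trivializationAt F₂ E₂ (baseMap Φ b)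
    (Φ ⟨b, (trivializationAt F₁ E₁ b).symmL 𝕜 b w⟩)).2

theorem contDiff_fiberInCoordinates
    (hΦ : ContMDiff (IB₁.prod 𝓘(𝕜, F₁)) (IB₂.prod 𝓘(𝕜, F₂)) n Φ)
    (hsmul : IntertwinesSMul 𝕜 Φ) (b : B₁) : ContDiff 𝕜 n (fiberInCoordinates 𝕜 Φ b) := by
  rw [← contMDiff_iff_contDiff]
  intro w
  have h := (contMDiffAt_totalSpace.1
    ((hΦ.comp (contMDiff_mk_trivializationAt_symmL (IB := IB₁) b)).contMDiffAt (x := w))).2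
  simp only [Function.comp_apply, hsmul.proj_apply] at h
  exact h

variable [VectorBundle 𝕜 F₂ E₂]

theorem fiberInCoordinates_smul (hsmul : IntertwinesSMul 𝕜 Φ) (b : B₁) (t : 𝕜) (w : F₁) :
    fiberInCoordinates 𝕜 Φ b (t • w) = t • fiberInCoordinates 𝕜 Φ b w := by
  set v : TotalSpace F₁ E₁ := ⟨b, (trivializationAt F₁ E₁ b).symmL 𝕜 b w⟩
  have hv : (Φ v).proj ∈ (trivializationAt F₂ E₂ (baseMap Φ b)).baseSet := by
    rw [hsmul.proj_apply]; exact mem_baseSet_trivializationAt F₂ E₂ _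
  simp only [fiberInCoordinates, map_smul]
  rw [hsmul t v]
  exact ((trivializationAt F₂ E₂ (baseMap Φ b)).linear 𝕜 hv).map_smul t _

variable (𝕜) in
noncomputable def fiberLinearMap (Φ : TotalSpace F₁ E₁ → TotalSpace F₂ E₂) (b : B₁) :
    E₁ b →ₗ[𝕜] E₂ (baseMap Φ b) :=
  ((trivializationAt F₂ E₂ (baseMap Φ b)).symmL 𝕜 (baseMap Φ b) ∘L
    fderiv 𝕜 (fiberInCoordinates 𝕜 Φ b) 0 ∘L
    (trivializationAt F₁ E₁ b).continuousLinearMapAt 𝕜 b).toLinearMap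

theorem apply_mk_eq_mk_fiberLinearMap
    (hΦ : ContMDiff (IB₁.prod 𝓘(𝕜, F₁)) (IB₂.prod 𝓘(𝕜, F₂)) n Φ) (hn : n ≠ 0)
    (hsmul : IntertwinesSMul 𝕜 Φ) (b : B₁) (y : E₁ b) :
    Φ ⟨b, y⟩ = ⟨baseMap Φ b, fiberLinearMap 𝕜 Φ b y⟩ := by
  have hlin : ⇑(fderiv 𝕜 (fiberInCoordinates 𝕜 Φ b) 0) = fiberInCoordinates 𝕜 Φ b :=
    coe_fderiv_zero_of_map_smul
      (((contDiff_fiberInCoordinates (IB₁ := IB₁) (IB₂ := IB₂) hΦ hsmul b).differentiable hn) 0)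
      (fiberInCoordinates_smul hsmul b)
  have hb₁ := mem_baseSet_trivializationAt F₁ E₁ b
  have hb₂ := mem_baseSet_trivializationAt F₂ E₂ (baseMap Φ b)
  simp only [fiberLinearMap, ContinuousLinearMap.coe_comp, Function.comp_apply,
    ContinuousLinearMap.coe_coe, hlin, fiberInCoordinates,
    Trivialization.symmL_continuousLinearMapAt _ hb₁, Trivialization.symmL_apply _ hb₂]
  exact (trivializationAt F₂ E₂ (baseMap Φ b)).eq_mk_symm_of_proj_eq (hsmul.proj_apply _) hb₂

end Morphism

end Bundle

theorem intertwines_scalar_mult_is_vector_bundle_morphism_general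
    {d₁ d₂ : ℕ}
    {M₁ : Type*} [TopologicalSpace M₁] [ChartedSpace (EuclideanSpace ℝ (Fin d₁)) M₁]
    {M₂ : Type*} [TopologicalSpace M₂] [ChartedSpace (EuclideanSpace ℝ (Fin d₂)) M₂]
    {F₁ : Type*} [NormedAddCommGroup F₁] [NormedSpace ℝ F₁]
    {F₂ : Type*} [NormedAddCommGroup F₂] [NormedSpace ℝ F₂]
    (E₁ : M₁ → Type*) [∀ x, AddCommGroup (E₁ x)] [∀ x, Module ℝ (E₁ x)]
    [∀ x, TopologicalSpace (E₁ x)]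
    [TopologicalSpace (TotalSpace F₁ E₁)] [FiberBundle F₁ E₁] [VectorBundle ℝ F₁ E₁]
    (E₂ : M₂ → Type*) [∀ x, AddCommGroup (E₂ x)] [∀ x, Module ℝ (E₂ x)]
    [∀ x, TopologicalSpace (E₂ x)]
    [TopologicalSpace (TotalSpace F₂ E₂)] [FiberBundle F₂ E₂] [VectorBundle ℝ F₂ E₂]
    (Φ : TotalSpace F₁ E₁ → TotalSpace F₂ E₂)
    (hΦ : ContMDiff ((𝓡 d₁).prod 𝓘(ℝ, F₁)) ((𝓡 d₂).prod 𝓘(ℝ, F₂)) (⊤ : ℕ∞) Φ)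
    (hhom : ∀ (t : ℝ) (v : TotalSpace F₁ E₁),
      Φ (TotalSpace.mk v.proj (t • v.2)) = TotalSpace.mk (Φ v).proj (t • (Φ v).2)) :
    ∃ φ : M₁ → M₂, ContMDiff (𝓡 d₁) (𝓡 d₂) (⊤ : ℕ∞) φ ∧
      (∀ v : TotalSpace F₁ E₁, (Φ v).proj = φ v.proj) ∧
      ∀ m : M₁, ∃ L : E₁ m →ₗ[ℝ] E₂ (φ m),
        ∀ e : E₁ m, Φ (TotalSpace.mk m e) = TotalSpace.mk (φ m) (L e) := by
  refine ⟨baseMap Φ, (contMDiff_proj E₂).comp (hΦ.comp (contMDiff_zeroSection ℝ E₁)),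
    IntertwinesSMul.proj_apply hhom, fun m => ⟨fiberLinearMap ℝ Φ m, fun e => ?_⟩⟩
  exact apply_mk_eq_mk_fiberLinearMap hΦ (by simp) hhom m e

/-- **Multiplication by reals is enough: morphisms of vector bundles.**
A smooth map `Φ` between total spaces of smooth vector bundles which intertwines the
fiberwise multiplications by reals, `Φ (t • v) = t • Φ v`, is a morphism of vector
bundles: it covers a smooth map `φ` of the bases and is linear on fibers. -/
theorem intertwines_scalar_mult_is_vector_bundle_morphism
    {d₁ d₂ : ℕ}
    {M₁ : Type*} [TopologicalSpace M₁] [ChartedSpace (EuclideanSpace ℝ (Fin d₁)) M₁]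
    [IsManifold (𝓡 d₁) (⊤ : ℕ∞) M₁]
    {M₂ : Type*} [TopologicalSpace M₂] [ChartedSpace (EuclideanSpace ℝ (Fin d₂)) M₂]
    [IsManifold (𝓡 d₂) (⊤ : ℕ∞) M₂]
    {F₁ : Type*} [NormedAddCommGroup F₁] [NormedSpace ℝ F₁] [FiniteDimensional ℝ F₁]
    {F₂ : Type*} [NormedAddCommGroup F₂] [NormedSpace ℝ F₂] [FiniteDimensional ℝ F₂]
    (E₁ : M₁ → Type*) [∀ x, AddCommGroup (E₁ x)] [∀ x, Module ℝ (E₁ x)]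
    [∀ x, TopologicalSpace (E₁ x)]
    [TopologicalSpace (TotalSpace F₁ E₁)] [FiberBundle F₁ E₁] [VectorBundle ℝ F₁ E₁]
    [ContMDiffVectorBundle (⊤ : ℕ∞) F₁ E₁ (𝓡 d₁)]
    (E₂ : M₂ → Type*) [∀ x, AddCommGroup (E₂ x)] [∀ x, Module ℝ (E₂ x)]
    [∀ x, TopologicalSpace (E₂ x)]
    [TopologicalSpace (TotalSpace F₂ E₂)] [FiberBundle F₂ E₂] [VectorBundle ℝ F₂ E₂]
    [ContMDiffVectorBundle (⊤ : ℕ∞) F₂ E₂ (𝓡 d₂)]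
    (Φ : TotalSpace F₁ E₁ → TotalSpace F₂ E₂)
    (hΦ : ContMDiff ((𝓡 d₁).prod 𝓘(ℝ, F₁)) ((𝓡 d₂).prod 𝓘(ℝ, F₂)) (⊤ : ℕ∞) Φ)
    (hhom : ∀ (t : ℝ) (v : TotalSpace F₁ E₁),
      Φ (TotalSpace.mk v.proj (t • v.2)) = TotalSpace.mk (Φ v).proj (t • (Φ v).2)) :
    ∃ φ : M₁ → M₂, ContMDiff (𝓡 d₁) (𝓡 d₂) (⊤ : ℕ∞) φ ∧
      (∀ v : TotalSpace F₁ E₁, (Φ v).proj = φ v.proj) ∧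
      ∀ m : M₁, ∃ L : E₁ m →ₗ[ℝ] E₂ (φ m),
        ∀ e : E₁ m, Φ (TotalSpace.mk m e) = TotalSpace.mk (φ m) (L e) :=
  intertwines_scalar_mult_is_vector_bundle_morphism_general E₁ E₂ Φ hΦ hhom
end
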